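/- arXiv:1910.13316 — 7 statements merged into one kernel-verified Lean document; each statement's English description precedes it below -/
import Mathlib

section
/- Let S be a countable set, P a transition matrix on S with escape probabilities α(x) = 1 - P x x > 0 for all x, π a stationary probability distribution for P, c = (∑_y α(y) π(y))⁻¹ with 0 < ∑_y α(y) π(y), and π̂(x) = c · α(x) · π(x). Let J : ℕ → S be a sequence such that for every f : S → ℝ with ∑_x |f(x)| π̂(x) < ∞, lim_{L→∞} (1/L) ∑_{k=1}^{L} f(J_k) = ∑_x f(x) π̂(x). Then for every h : S → ℝ with ∑_x |h(x)| π(x) < ∞, the ratio of inverse-escape-weighted sums converges: lim_{L→∞} (∑_{k=1}^{L} h(J_k)/α(J_k)) / (∑_{k=1}^{L} 1/α(J_k)) = ∑_x h(x) π(x). -/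
open Filter

/-- if averages of any `π̂`-integrable function along the jump-chain
sample path `J` converge to its `π̂`-expectation, then for any `π`-integrable `h`,
the self-normalized inverse-escape-weighted averages converge:
`(∑_{k=1}^L h(J_k)/α(J_k)) / (∑_{k=1}^L 1/α(J_k)) → ∑_x h(x) π(x)`. -/
theorem jump_chain_self_normalized_estimator
    {S : Type*} [Countable S]
    (P : S → S → ℝ)
    (hP_nonneg : ∀ x y, 0 ≤ P x y)
    (hP_rowsum : ∀ x, ∑' y, P x y = 1)
    (hα_pos : ∀ x, 0 < 1 - P x x)
    (π : S → ℝ)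
    (hπ_nonneg : ∀ x, 0 ≤ π x)
    (hπ_sum : ∑' x, π x = 1)
    (hπ_stat : ∀ y, ∑' x, π x * P x y = π y)
    (hden_pos : 0 < ∑' y, (1 - P y y) * π y)
    (c : ℝ) (hc : c = (∑' y, (1 - P y y) * π y)⁻¹)
    (πhat : S → ℝ) (hπhat : ∀ x, πhat x = c * (1 - P x x) * π x)
    (J : ℕ → S)
    (hJ : ∀ f : S → ℝ, Summable (fun x => |f x| * πhat x) →
      Tendsto (fun L : ℕ => (1 / (L : ℝ)) * ∑ k ∈ Finset.Icc 1 L, f (J k))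
        atTop (nhds (∑' x, f x * πhat x)))
    (h : S → ℝ) (hh : Summable (fun x => |h x| * π x)) :
    Tendsto (fun L : ℕ =>
        (∑ k ∈ Finset.Icc 1 L, h (J k) / (1 - P (J k) (J k)))
          / (∑ k ∈ Finset.Icc 1 L, 1 / (1 - P (J k) (J k))))
      atTop (nhds (∑' x, h x * π x)) := by
  have hcpos : 0 < c := by rw [hc]; exact inv_pos.mpr hden_pos
  have hcne : c ≠ 0 := ne_of_gt hcpos
  have hαne : ∀ x, (1 - P x x) ≠ 0 := fun x => ne_of_gt (hα_pos x)
  -- summability of h * π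
  have hsum_hπ : Summable (fun x => h x * π x) := by
    apply Summable.of_abs
    have he : (fun x => |h x * π x|) = fun x => |h x| * π x := by
      funext x; rw [abs_mul, abs_of_nonneg (hπ_nonneg x)]
    rw [he]; exact hh
  have hsum_π : Summable π := by
    by_contra h'
    rw [tsum_eq_zero_of_not_summable h'] at hπ_sum
    norm_num at hπ_sum
  -- first function: h / α
  have key1 : ∀ x, |h x / (1 - P x x)| * πhat x = c * (|h x| * π x) := by
    intro x
    rw [hπhat, abs_div, abs_of_pos (hα_pos x)]
    field_simp [hαne x]
  have key1' : ∀ x, (h x / (1 - P x x)) * πhat x = c * (h x * π x) := by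
    intro x
    rw [hπhat]
    field_simp [hαne x]
  have hs1 : Summable (fun x => |h x / (1 - P x x)| * πhat x) := by
    simp_rw [key1]
    exact hh.mul_left c
  have T1 := hJ (fun x => h x / (1 - P x x)) hs1
  have ht1 : (∑' x, (h x / (1 - P x x)) * πhat x) = c * ∑' x, h x * π x := by
    simp_rw [key1']
    exact tsum_mul_left
  rw [ht1] at T1
  -- second function: 1 / α
  have key2 : ∀ x, |1 / (1 - P x x)| * πhat x = c * π x := by
    intro x
    rw [hπhat, abs_div, abs_one, abs_of_pos (hα_pos x)]
    field_simp [hαne x]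
  have key2' : ∀ x, (1 / (1 - P x x)) * πhat x = c * π x := by
    intro x
    rw [hπhat]
    field_simp [hαne x]
  have hs2 : Summable (fun x => |1 / (1 - P x x)| * πhat x) := by
    simp_rw [key2]
    exact hsum_π.mul_left c
  have T2 := hJ (fun x => 1 / (1 - P x x)) hs2
  have ht2 : (∑' x, (1 / (1 - P x x)) * πhat x) = c := by
    simp_rw [key2', tsum_mul_left, hπ_sum, mul_one]
  rw [ht2] at T2
  have T := T1.div T2 hcne
  rw [mul_comm, mul_div_assoc, div_self hcne, mul_one] at T
  refine T.congr' ?_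
  filter_upwards [eventually_ge_atTop 1] with L hL
  have hLne : (1 / (L : ℝ)) ≠ 0 := by
    apply one_div_ne_zero
    exact_mod_cast Nat.pos_of_ne_zero (by omega) |>.ne'
  simp only [Pi.div_apply]
  rw [mul_div_mul_left _ _ hLne]
end

section
/- Let (X, 𝒜) be a measurable space, μ an atomless σ-finite measure on X, r : X → [0,1] measurable, and ρ : X × X → [0,∞) jointly measurable, with r(x) + ∫ ρ(x,y) μ(dy) = 1 for every x. Define the Markov kernel κ(x, ·) = r(x) · δ_x + μ.withDensity(ρ(x, ·)), the escape probability α(x) = 1 - r(x) = ∫ ρ(x,z) μ(dz), assumed strictly positive for all x, and the jump kernel κ̂(x, ·) = μ.withDensity(y ↦ ρ(x,y)/α(x)). Suppose π : X → [0,∞) is a measurable probability density with respect to μ (∫ π dμ = 1) such that the measure μ.withDensity(π) is stationary for κ, i.e. ∫ κ(x, A) π(x) μ(dx) = ∫_A π dμ for every measurable A. Let c = (∫ α(y) π(y) μ(dy))⁻¹, assuming ∫ α π dμ > 0. Then the measure μ.withDensity(x ↦ c · α(x) · π(x)) is a stationary probability measure for the jump kernel κ̂, i.e. ∫ κ̂(x,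 A) c α(x) π(x) μ(dx) = ∫_A c α π dμ for every measurable A. -/
open MeasureTheory ENNReal

/-- Theorem contthm (iv): on a general state space with atomless
σ-finite reference measure `μ`, if the chain `κ(x,·) = r(x)·δ_x + ρ(x,·)μ` has
stationary density `π` with respect to `μ`, then the jump kernel
`κ̂(x,·) = (ρ(x,·)/α(x))μ` has stationary probability density `c·α·π` where
`α(x) = 1 - r(x)` and `c = (∫ α π dμ)⁻¹`. -/
theorem jump_kernel_stationary_general
    {X : Type*} [MeasurableSpace X]
    (μ : Measure X) [SigmaFinite μ] [NullSingletonClass μ]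
    (r : X → ℝ≥0∞) (hr_meas : Measurable r) (hr_le : ∀ x, r x ≤ 1)
    (ρ : X → X → ℝ≥0∞) (hρ_meas : Measurable (Function.uncurry ρ))
    (hrow : ∀ x, r x + ∫⁻ y, ρ x y ∂μ = 1)
    (α : X → ℝ≥0∞) (hα_def : ∀ x, α x = 1 - r x) (hα_pos : ∀ x, 0 < α x)
    (κ : X → Measure X)
    (hκ : ∀ x, κ x = r x • Measure.dirac x + μ.withDensity (ρ x))
    (κhat : X → Measure X)
    (hκhat : ∀ x, κhat x = μ.withDensity (fun y => ρ x y / α x))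
    (π : X → ℝ≥0∞) (hπ_meas : Measurable π)
    (hπ_prob : ∫⁻ x, π x ∂μ = 1)
    (hπ_stat : ∀ A : Set X, MeasurableSet A →
      ∫⁻ x, κ x A * π x ∂μ = ∫⁻ x in A, π x ∂μ)
    (hden_pos : 0 < ∫⁻ y, α y * π y ∂μ)
    (c : ℝ≥0∞) (hc : c = (∫⁻ y, α y * π y ∂μ)⁻¹) :
    (∫⁻ x, c * α x * π x ∂μ = 1) ∧
      (∀ A : Set X, MeasurableSet A →
        ∫⁻ x, κhat x A * (c * α x * π x) ∂μ = ∫⁻ x in A, c * α x * π x ∂μ) := by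
  have hα_meas : Measurable α := by
    have h : α = fun x => 1 - r x := funext hα_def
    rw [h]; exact measurable_const.sub hr_meas
  have hα_le : ∀ x, α x ≤ 1 := fun x => (hα_def x) ▸ tsub_le_self
  have hα_ne_top : ∀ x, α x ≠ ⊤ := fun x => ((hα_le x).trans_lt one_lt_top).ne
  have hαr : ∀ x, α x + r x = 1 := fun x => by
    rw [hα_def x]; exact tsub_add_cancel_of_le (hr_le x)
  have hint_le : ∫⁻ y, α y * π y ∂μ ≤ 1 := by
    calc ∫⁻ y, α y * π y ∂μ ≤ ∫⁻ y, 1 * π y ∂μ :=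
          lintegral_mono fun y => mul_le_mul_left (hα_le y) _
      _ = 1 := by simpa using hπ_prob
  have hc_ne_top : c ≠ ⊤ := by
    rw [hc]; exact ENNReal.inv_ne_top.mpr hden_pos.ne'
  have hρx : ∀ x, Measurable (ρ x) := fun x => hρ_meas.of_uncurry_left
  have hmeasA : ∀ (A : Set X), MeasurableSet A →
      Measurable (fun x => ∫⁻ y in A, ρ x y ∂μ) := by
    intro A hA
    have h : ∀ x, ∫⁻ y in A, ρ x y ∂μ
        = ∫⁻ y, (Prod.snd ⁻¹' A).indicator (Function.uncurry ρ) (x, y) ∂μ := by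
      intro x
      rw [← lintegral_indicator hA]
      refine lintegral_congr fun y => ?_
      by_cases hy : y ∈ A <;> simp [hy, Set.indicator, Function.uncurry]
    simp_rw [h]
    exact Measurable.lintegral_prod_right (hρ_meas.indicator (measurable_snd hA))
  -- key identity
  have key : ∀ A : Set X, MeasurableSet A →
      ∫⁻ x, (∫⁻ y in A, ρ x y ∂μ) * π x ∂μ = ∫⁻ x in A, α x * π x ∂μ := by
    intro A hA
    have hstat := hπ_stat A hA
    have hκA : ∀ x, κ x A = r x * A.indicator 1 x + ∫⁻ y in A, ρ x y ∂μ := by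
      intro x
      rw [hκ x]
      simp [Measure.dirac_apply' _ hA, withDensity_apply _ hA]
    simp_rw [hκA, add_mul] at hstat
    rw [lintegral_add_left (f := fun x => r x * A.indicator 1 x * π x) ((hr_meas.mul (measurable_one.indicator hA)).mul hπ_meas)] at hstat
    have hind : ∀ x, r x * A.indicator 1 x * π x = A.indicator (fun x => r x * π x) x := by
      intro x
      by_cases hx : x ∈ A <;> simp [hx]
    simp_rw [hind] at hstat
    rw [lintegral_indicator hA] at hstat
    have hfin : ∫⁻ x in A, r x * π x ∂μ ≠ ⊤ := by
      have h1 : ∫⁻ x in A, r x * π x ∂μ ≤ ∫⁻ x, π x ∂μ := by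
        refine le_trans (setLIntegral_mono hπ_meas fun x _ => ?_)
          (setLIntegral_le_lintegral A π)
        calc r x * π x ≤ 1 * π x := mul_le_mul_left (hr_le x) _
          _ = π x := one_mul _
      rw [hπ_prob] at h1
      exact (h1.trans_lt one_lt_top).ne
    have h2 : ∫⁻ x in A, α x * π x ∂μ + ∫⁻ x in A, r x * π x ∂μ = ∫⁻ x in A, π x ∂μ := by
      rw [← lintegral_add_left (f := fun x => α x * π x) (hα_meas.mul hπ_meas)]
      simp_rw [← add_mul, hαr, one_mul]
    rw [← h2] at hstat
    rw [add_comm] at hstat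
    exact WithTop.add_right_cancel hfin hstat
  constructor
  · simp_rw [mul_assoc]
    rw [lintegral_const_mul' _ _ hc_ne_top, hc]
    exact ENNReal.inv_mul_cancel hden_pos.ne' (hint_le.trans_lt one_lt_top).ne
  · intro A hA
    have hκhatA : ∀ x, κhat x A = (∫⁻ y in A, ρ x y ∂μ) * (α x)⁻¹ := by
      intro x
      rw [hκhat x, withDensity_apply _ hA]
      simp_rw [div_eq_mul_inv]
      exact lintegral_mul_const _ (hρx x)
    have hpt : ∀ x, κhat x A * (c * α x * π x) = c * ((∫⁻ y in A, ρ x y ∂μ) * π x) := by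
      intro x
      rw [hκhatA x]
      have h := ENNReal.inv_mul_cancel (hα_pos x).ne' (hα_ne_top x)
      calc (∫⁻ y in A, ρ x y ∂μ) * (α x)⁻¹ * (c * α x * π x)
          = c * ((∫⁻ y in A, ρ x y ∂μ) * π x) * ((α x)⁻¹ * α x) := by ring
        _ = c * ((∫⁻ y in A, ρ x y ∂μ) * π x) := by rw [h, mul_one]
    simp_rw [hpt]
    rw [lintegral_const_mul' _ _ hc_ne_top, key A hA]
    simp_rw [mul_assoc]
    rw [lintegral_const_mul' _ _ hc_ne_top]
end

section
/- Let (X, 𝒜) be a measurable space, μ an atomless σ-finite measure on X, r : X → [0,1] measurable, ρ : X × X → [0,∞) jointly measurable with r(x) + ∫ ρ(x,y) μ(dy) = 1 for every x, κ(x, ·) = r(x) · δ_x + μ.withDensity(ρ(x, ·)) the associated Markov kernel, α(x) = 1 - r(x) > 0 for all x, and κ̂(x, ·) = μ.withDensity(y ↦ ρ(x,y)/α(x)) the jump kernel. Let φ be a nonzero σ-finite measure on X, and say a kernel Q is φ-irreducible if for every x ∈ X and every measurable A with φ(A) > 0 there exists n ≥ 1 with Q^n(x, A) > 0, where Q^n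 denotes the n-fold composition of Q. If κ is φ-irreducible, then κ̂ is φ-irreducible. -/
open MeasureTheory ENNReal

/-- `kiter Q n x A` is the `(n+1)`-fold composition `Q^(n+1)(x, A)`:
`Q^1 = Q` and `Q^(n+1)(x, A) = ∫ Q^n(y, A) Q(x, dy)`. -/
noncomputable def kiter {X : Type*} [MeasurableSpace X]
    (Q : X → Measure X) : ℕ → X → Set X → ℝ≥0∞
  | 0, x, A => Q x A
  | n + 1, x, A => ∫⁻ y, kiter Q n y A ∂(Q x)

/-- A kernel `Q` is `φ`-irreducible if for every `x` and every measurable `A`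
with `φ A > 0`, there is some `n ≥ 1` with `Q^n(x, A) > 0`. -/
def PhiIrreducible {X : Type*} [MeasurableSpace X]
    (φ : Measure X) (Q : X → Measure X) : Prop :=
  ∀ (x : X) (A : Set X), MeasurableSet A → 0 < φ A → ∃ n : ℕ, 0 < kiter Q n x A

/-- Measurability of iterates of a measurable Markov kernel. -/
lemma kiter_measurable {X : Type*} [MeasurableSpace X]
    (Q : X → Measure X) (hQ : Measurable Q)
    (hP : ∀ x, IsProbabilityMeasure (Q x))
    {A : Set X} (hA : MeasurableSet A) :
    ∀ n, Measurable fun x => kiter Q n x A := by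
  intro n
  let K : ProbabilityTheory.Kernel X X := ⟨Q, hQ⟩
  haveI : ProbabilityTheory.IsMarkovKernel K := ⟨hP⟩
  induction n with
  | zero =>
      exact (Measure.measurable_coe hA).comp hQ
  | succ n ih =>
      have h : Measurable fun p : X × X => kiter Q n p.2 A := ih.comp measurable_snd
      have := Measurable.lintegral_kernel_prod_right' (κ := K) h
      simp only [kiter]; exact this

/-- Theorem contthm (iii): if the chain
`κ(x,·) = r(x)·δ_x + ρ(x,·)μ` is `φ`-irreducible, then so is the jump kernel
`κ̂(x,·) = (ρ(x,·)/α(x))μ`, where `α(x) = 1 - r(x) > 0`. -/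
theorem jump_kernel_phi_irreducible
    {X : Type*} [MeasurableSpace X]
    (μ : Measure X) [SigmaFinite μ] [NullSingletonClass μ]
    (r : X → ℝ≥0∞) (hr_meas : Measurable r) (hr_le : ∀ x, r x ≤ 1)
    (ρ : X → X → ℝ≥0∞) (hρ_meas : Measurable (Function.uncurry ρ))
    (hrow : ∀ x, r x + ∫⁻ y, ρ x y ∂μ = 1)
    (α : X → ℝ≥0∞) (hα_def : ∀ x, α x = 1 - r x) (hα_pos : ∀ x, 0 < α x)
    (κ : X → Measure X)
    (hκ : ∀ x, κ x = r x • Measure.dirac x + μ.withDensity (ρ x))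
    (κhat : X → Measure X)
    (hκhat : ∀ x, κhat x = μ.withDensity (fun y => ρ x y / α x))
    (φ : Measure X) [SigmaFinite φ] (hφ : φ ≠ 0)
    (hirr : PhiIrreducible φ κ) :
    PhiIrreducible φ κhat := by
  classical
  -- basic facts about α and ρ
  have hα_meas : Measurable α := by
    have : α = fun x => 1 - r x := funext hα_def
    rw [this]; exact (measurable_const.sub hr_meas)
  have hα_le : ∀ x, α x ≤ 1 := fun x => (hα_def x) ▸ tsub_le_self
  have hα_ne_top : ∀ x, α x ≠ ∞ := fun x => ((hα_le x).trans_lt one_lt_top).ne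
  have hρx : ∀ x, Measurable (ρ x) := fun x => hρ_meas.comp measurable_prodMk_left
  have hρint : ∀ x, ∫⁻ y, ρ x y ∂μ = α x := by
    intro x
    rw [hα_def x]
    have := hrow x
    rw [add_comm] at this
    exact ENNReal.eq_sub_of_add_eq (((hr_le x).trans_lt one_lt_top).ne) this
  -- ρ x y ≤ ρ x y / α x
  have hρ_le_div : ∀ x y, ρ x y ≤ ρ x y / α x := by
    intro x y
    rw [ENNReal.div_eq_inv_mul]
    calc ρ x y = 1 * ρ x y := (one_mul _).symm
    _ ≤ (α x)⁻¹ * ρ x y :=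
        mul_le_mul_left (ENNReal.one_le_inv.mpr (hα_le x)) _
  -- measurability of the kernels
  have hκhat_meas : Measurable κhat := by
    apply Measure.measurable_of_measurable_coe
    intro s hs
    have heq : (fun x => κhat x s)
        = fun x => ∫⁻ y, (fun p : X × X => if p.2 ∈ s then ρ p.1 p.2 / α p.1 else 0) (x, y) ∂μ := by
      funext x
      rw [hκhat x, withDensity_apply _ hs, ← lintegral_indicator hs]
      simp [Set.indicator_apply]
    rw [heq]
    exact Measurable.lintegral_prod_right'
      (Measurable.ite (measurable_snd hs)
        (hρ_meas.div (hα_meas.comp measurable_fst)) measurable_const)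
  have hκ_meas : Measurable κ := by
    apply Measure.measurable_of_measurable_coe
    intro s hs
    have heq : (fun x => κ x s)
        = fun x => r x * s.indicator (fun _ => (1 : ℝ≥0∞)) x
            + ∫⁻ y, (fun p : X × X => if p.2 ∈ s then ρ p.1 p.2 else 0) (x, y) ∂μ := by
      funext x
      rw [hκ x]
      rw [Measure.add_apply, Measure.smul_apply, smul_eq_mul,
        Measure.dirac_apply' _ hs, withDensity_apply _ hs, ← lintegral_indicator hs]
      simp [Set.indicator_apply]
    rw [heq]
    exact (hr_meas.mul (measurable_one.indicator hs)).add
      (Measurable.lintegral_prod_right'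
        (Measurable.ite (measurable_snd hs) hρ_meas measurable_const))
  -- both kernels are Markov
  have hκ_prob : ∀ x, IsProbabilityMeasure (κ x) := by
    intro x
    constructor
    rw [hκ x, Measure.add_apply, Measure.smul_apply, smul_eq_mul,
      withDensity_apply _ MeasurableSet.univ, Measure.restrict_univ]
    simpa using hrow x
  have hκhat_prob : ∀ x, IsProbabilityMeasure (κhat x) := by
    intro x
    constructor
    rw [hκhat x, withDensity_apply _ MeasurableSet.univ, Measure.restrict_univ]
    simp only [div_eq_mul_inv]
    rw [lintegral_mul_const _ (hρx x), hρint x]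
    exact ENNReal.mul_inv_cancel (hα_pos x).ne' (hα_ne_top x)
  intro x A hA hφA
  -- measurability of iterates
  have hgκ : ∀ n, Measurable fun y => kiter κ n y A :=
    kiter_measurable κ hκ_meas hκ_prob hA
  have hgκhat : ∀ n, Measurable fun y => kiter κhat n y A :=
    kiter_measurable κhat hκhat_meas hκhat_prob hA
  -- T : points from which κhat reaches A
  set T : Set X := ⋃ m, {y | 0 < kiter κhat m y A} with hT
  -- if κhat y T > 0 then y can reach A via κhat
  have hstep : ∀ y, 0 < κhat y T → ∃ m, 0 < kiter κhat m y A := by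
    intro y hyT
    have hTm : ∃ m, 0 < κhat y {z | 0 < kiter κhat m z A} := by
      by_contra hcon
      push_neg at hcon
      simp only [le_zero_iff] at hcon
      have : κhat y T = 0 := by
        rw [hT]
        exact measure_iUnion_null hcon
      exact absurd this hyT.ne'
    obtain ⟨m, hm⟩ := hTm
    refine ⟨m + 1, ?_⟩
    show 0 < ∫⁻ z, kiter κhat m z A ∂(κhat y)
    rw [lintegral_pos_iff_support (hgκhat m)]
    refine lt_of_lt_of_le hm (measure_mono ?_)
    intro z hz
    exact hz.ne'
  -- positivity of κhat on sets where ρ is positive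
  have hκhat_pos : ∀ y (U : Set X), MeasurableSet U → 0 < μ U →
      (∀ z ∈ U, ρ y z ≠ 0) → 0 < κhat y U := by
    intro y U hU hμU hρpos
    rw [hκhat y, withDensity_apply _ hU, ← lintegral_indicator hU,
      lintegral_pos_iff_support (Measurable.indicator (f := fun a => ρ y a / α y) (((hρx y).div measurable_const)) hU)]
    refine lt_of_lt_of_le hμU (measure_mono ?_)
    intro z hz
    have hne : ρ y z / α y ≠ 0 :=
      ENNReal.div_ne_zero.mpr ⟨hρpos z hz, hα_ne_top y⟩
    show U.indicator (fun z => ρ y z / α y) z ≠ 0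
    rwa [Set.indicator_of_mem hz]
  -- key lemma
  have key : ∀ n y, 0 < kiter κ n y A → y ∈ A ∨ ∃ m, 0 < kiter κhat m y A := by
    intro n
    induction n with
    | zero =>
        intro y hy
        simp only [kiter] at hy
        rw [hκ y, Measure.add_apply, Measure.smul_apply, smul_eq_mul,
          Measure.dirac_apply' _ hA, withDensity_apply _ hA] at hy
        by_cases h2 : 0 < ∫⁻ z in A, ρ y z ∂μ
        · right
          refine ⟨0, ?_⟩
          show 0 < κhat y A
          rw [hκhat y, withDensity_apply _ hA]
          refine lt_of_lt_of_le h2 (lintegral_mono fun z => hρ_le_div y z)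
        · left
          rw [not_lt, le_zero_iff] at h2
          rw [h2, add_zero] at hy
          by_contra hyA
          rw [Set.indicator_of_notMem hyA, mul_zero] at hy
          exact lt_irrefl 0 hy
    | succ n ih =>
        intro y hy
        simp only [kiter] at hy
        rw [hκ y, lintegral_add_measure, lintegral_smul_measure,
          lintegral_dirac' _ (hgκ n),
          lintegral_withDensity_eq_lintegral_mul μ (hρx y) (hgκ n)] at hy
        simp only [Pi.mul_apply] at hy
        have hcases : 0 < r y * kiter κ n y A ∨ 0 < ∫⁻ z, ρ y z * kiter κ n z A ∂μ := by
          by_contra hcon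
          push_neg at hcon
          obtain ⟨hc1, hc2⟩ := hcon
          rw [le_zero_iff] at hc1 hc2
          rw [smul_eq_mul, hc1, hc2, add_zero] at hy
          exact lt_irrefl 0 hy
        rcases hcases with h1 | h2
        · have hgy : 0 < kiter κ n y A := by
            rcases eq_or_ne (kiter κ n y A) 0 with h | h
            · rw [h, mul_zero] at h1; exact absurd h1 (lt_irrefl 0)
            · exact pos_iff_ne_zero.mpr h
          exact ih y hgy
        · right
          rw [lintegral_pos_iff_support (f := fun z => ρ y z * kiter κ n z A) ((hρx y).mul (hgκ n))] at h2
          set U : Set X := Function.support (fun z => ρ y z * kiter κ n z A) with hU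
          have hUmeas : MeasurableSet U :=
            measurableSet_support ((hρx y).mul (hgκ n))
          have hUsub : U ⊆ A ∪ T := by
            intro z hz
            simp only [hU, Function.mem_support, mul_ne_zero_iff] at hz
            rcases ih z (pos_iff_ne_zero.mpr hz.2) with h | ⟨m, hm⟩
            · exact Or.inl h
            · exact Or.inr (Set.mem_iUnion.mpr ⟨m, hm⟩)
          have hρposU : ∀ z ∈ U, ρ y z ≠ 0 := by
            intro z hz
            simp only [hU, Function.mem_support, mul_ne_zero_iff] at hz
            exact hz.1
          have hposU : 0 < κhat y U := hκhat_pos y U hUmeas h2 hρposU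
          have hposAT : 0 < κhat y (A ∪ T) := lt_of_lt_of_le hposU (measure_mono hUsub)
          by_cases hyA : 0 < κhat y A
          · exact ⟨0, hyA⟩
          · rw [not_lt, le_zero_iff] at hyA
            have : 0 < κhat y T := by
              have hle := measure_union_le (μ := κhat y) A T
              rw [hyA, zero_add] at hle
              exact lt_of_lt_of_le hposAT hle
            exact hstep y this
  -- conclusion
  by_cases h0 : 0 < κhat x A
  · exact ⟨0, h0⟩
  · rw [not_lt, le_zero_iff] at h0
    have huniv : κhat x Set.univ = 1 := (hκhat_prob x).measure_univ
    have hsub : (Set.univ : Set X) ⊆ A ∪ T := by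
      intro y _
      obtain ⟨n, hn⟩ := hirr y A hA hφA
      rcases key n y hn with h | ⟨m, hm⟩
      · exact Or.inl h
      · exact Or.inr (Set.mem_iUnion.mpr ⟨m, hm⟩)
    have hle : (1 : ℝ≥0∞) ≤ κhat x A + κhat x T := by
      calc (1 : ℝ≥0∞) = κhat x Set.univ := huniv.symm
      _ ≤ κhat x (A ∪ T) := measure_mono hsub
      _ ≤ κhat x A + κhat x T := measure_union_le _ _
    rw [h0, zero_add] at hle
    exact hstep x (lt_of_lt_of_le one_pos hle)
end

section
/- Let P be the Example 2 Uniform Selection transition matrix on the nonnegative integers, and let (X_n) be a Markov chain with transitions P started at x₀ ∈ {1, 2, 3}. Let s(x₀) = ℙ(∃ n, X_n = 4 and X_m ≠ 0 for all m ≤ n) be the probability of hitting 4 before 0. Then s(1) = 3/7, s(2) = 4/7, and s(3) = 13/21. -/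
open MeasureTheory Classical

/-- The Example 2 Uniform Selection transition matrix on the nonnegative integers:
`P 0 1 = 1`; for `a ≥ 1`, `P (4a) (4a±1) = 1/2`; for `x ≡ 1, 2 (mod 4)`,
`P x (x-1) = 1/4` and `P x (x+1) = 3/4`; for `x ≡ 3 (mod 4)`,
`P x (x-1) = 8/9` and `P x (x+1) = 1/9`; all other entries 0. -/
noncomputable def uniformSelP (x y : ℕ) : ℝ :=
  if x = 0 then (if y = 1 then 1 else 0)
  else if x % 4 = 0 then (if y = x - 1 ∨ y = x + 1 then 1 / 2 else 0)
  else if x % 4 = 3 then (if y = x - 1 then 8 / 9 else if y = x + 1 then 1 / 9 else 0)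
  else (if y = x - 1 then 1 / 4 else if y = x + 1 then 3 / 4 else 0)

/-- `(X n)` is a Markov chain with transition matrix `P` started at `x₀`:
the probability of each finite path is the product of transition probabilities. -/
def IsMarkovChainFrom {Ω : Type*} [MeasurableSpace Ω] (Pr : Measure Ω)
    (P : ℕ → ℕ → ℝ) (x₀ : ℕ) (X : ℕ → Ω → ℕ) : Prop :=
  ∀ (n : ℕ) (p : ℕ → ℕ),
    (Pr {ω | ∀ i ≤ n, X i ω = p i}).toReal
      = (if p 0 = x₀ then (1 : ℝ) else 0) * ∏ i ∈ Finset.range n, P (p i) (p (i + 1))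

def In3 (x : ℕ) : Prop := x = 1 ∨ x = 2 ∨ x = 3

noncomputable def pw (x₀ n : ℕ) (p : ℕ → ℕ) : ℝ :=
  (if p 0 = x₀ then (1 : ℝ) else 0) * ∏ i ∈ Finset.range n, uniformSelP (p i) (p (i + 1))

noncomputable def uvec (x₀ : ℕ) : ℕ → ℕ → ℝ
  | 0 => fun x => if x = x₀ then 1 else 0
  | (N + 1) => fun x =>
      uvec x₀ N 1 * uniformSelP 1 x + uvec x₀ N 2 * uniformSelP 2 x +
        uvec x₀ N 3 * uniformSelP 3 x

noncomputable def sfun (x₀ N : ℕ) : ℝ :=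
  3 / 7 * uvec x₀ N 1 + 4 / 7 * uvec x₀ N 2 + 13 / 21 * uvec x₀ N 3

noncomputable def rfun (x₀ N : ℕ) : ℝ :=
  uvec x₀ N 1 + uvec x₀ N 2 + uvec x₀ N 3

lemma uniformSelP_nonneg (x y : ℕ) : 0 ≤ uniformSelP x y := by
  unfold uniformSelP
  repeat' split
  all_goals norm_num

lemma uvec_nonneg (x₀ N x : ℕ) : 0 ≤ uvec x₀ N x := by
  induction N generalizing x with
  | zero =>
    simp only [uvec]; split <;> norm_num
  | succ N ih =>
    simp only [uvec]
    have h1 := uniformSelP_nonneg 1 x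
    have h2 := uniformSelP_nonneg 2 x
    have h3 := uniformSelP_nonneg 3 x
    have := ih 1; have := ih 2; have := ih 3
    positivity

lemma uvec_succ_0 (x₀ N : ℕ) : uvec x₀ (N + 1) 0 = 1/4 * uvec x₀ N 1 := by
  simp only [uvec]; norm_num [uniformSelP]; ring

lemma uvec_succ_1 (x₀ N : ℕ) : uvec x₀ (N + 1) 1 = 1/4 * uvec x₀ N 2 := by
  simp only [uvec]; norm_num [uniformSelP]; ring

lemma uvec_succ_2 (x₀ N : ℕ) :
    uvec x₀ (N + 1) 2 = 3/4 * uvec x₀ N 1 + 8/9 * uvec x₀ N 3 := by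
  simp only [uvec]; norm_num [uniformSelP]; ring

lemma uvec_succ_3 (x₀ N : ℕ) : uvec x₀ (N + 1) 3 = 3/4 * uvec x₀ N 2 := by
  simp only [uvec]; norm_num [uniformSelP]; ring

lemma uvec_succ_4 (x₀ N : ℕ) : uvec x₀ (N + 1) 4 = 1/9 * uvec x₀ N 3 := by
  simp only [uvec]; norm_num [uniformSelP]; ring

lemma sfun_step (x₀ N : ℕ) : uvec x₀ (N + 1) 4 + sfun x₀ (N + 1) = sfun x₀ N := by
  simp only [sfun, uvec_succ_1, uvec_succ_2, uvec_succ_3, uvec_succ_4]; ring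

lemma rfun_step (x₀ N : ℕ) :
    uvec x₀ (N + 1) 0 + uvec x₀ (N + 1) 4 + rfun x₀ (N + 1) = rfun x₀ N := by
  simp only [rfun, uvec_succ_0, uvec_succ_1, uvec_succ_2, uvec_succ_3, uvec_succ_4]; ring

lemma sum4 {x₀ : ℕ} (hx : In3 x₀) (K : ℕ) :
    ∑ k ∈ Finset.range (K + 1), uvec x₀ k 4 = sfun x₀ 0 - sfun x₀ K := by
  induction K with
  | zero =>
    have : x₀ ≠ 4 := by rcases hx with rfl | rfl | rfl <;> omega
    simp [uvec, Ne.symm this]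
  | succ K ih =>
    rw [Finset.sum_range_succ, ih]
    have := sfun_step x₀ K
    linarith

lemma sum04 {x₀ : ℕ} (hx : In3 x₀) (K : ℕ) :
    ∑ k ∈ Finset.range (K + 1), (uvec x₀ k 0 + uvec x₀ k 4)
      = rfun x₀ 0 - rfun x₀ K := by
  induction K with
  | zero =>
    have h4 : x₀ ≠ 4 := by rcases hx with rfl | rfl | rfl <;> omega
    have h0 : x₀ ≠ 0 := by rcases hx with rfl | rfl | rfl <;> omega
    simp [uvec, Ne.symm h4, Ne.symm h0]
  | succ K ih =>
    rw [Finset.sum_range_succ, ih]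
    have := rfun_step x₀ K
    linarith

lemma rfun_two_step (x₀ N : ℕ) : rfun x₀ (N + 2) ≤ 8/9 * rfun x₀ N := by
  have h1 := uvec_nonneg x₀ N 1
  have h2 := uvec_nonneg x₀ N 2
  have h3 := uvec_nonneg x₀ N 3
  simp only [rfun, uvec_succ_1, uvec_succ_2, uvec_succ_3]
  nlinarith

lemma rfun_geom (x₀ : ℕ) : ∀ j, rfun x₀ (2 * j) ≤ (8/9 : ℝ) ^ j * rfun x₀ 0 := by
  intro j
  induction j with
  | zero => simp
  | succ j ih =>
    have h := rfun_two_step x₀ (2 * j)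
    have : 2 * (j + 1) = 2 * j + 2 := by ring
    rw [this, pow_succ]
    nlinarith

lemma sfun_le_rfun (x₀ N : ℕ) : sfun x₀ N ≤ rfun x₀ N := by
  have h1 := uvec_nonneg x₀ N 1
  have h2 := uvec_nonneg x₀ N 2
  have h3 := uvec_nonneg x₀ N 3
  simp only [sfun, rfun]; nlinarith

lemma sfun_nonneg (x₀ N : ℕ) : 0 ≤ sfun x₀ N := by
  have h1 := uvec_nonneg x₀ N 1
  have h2 := uvec_nonneg x₀ N 2
  have h3 := uvec_nonneg x₀ N 3
  simp only [sfun]; nlinarith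

lemma P_ne_zero_cases {a b : ℕ} (ha : In3 a) (h : uniformSelP a b ≠ 0) :
    (a = 1 ∧ (b = 0 ∨ b = 2)) ∨ (a = 2 ∧ (b = 1 ∨ b = 3)) ∨ (a = 3 ∧ (b = 2 ∨ b = 4)) := by
  rcases ha with rfl | rfl | rfl
  · refine Or.inl ⟨rfl, ?_⟩
    by_contra hb; push_neg at hb
    exact h (by norm_num [uniformSelP, hb.1, hb.2])
  · refine Or.inr (Or.inl ⟨rfl, ?_⟩)
    by_contra hb; push_neg at hb
    exact h (by norm_num [uniformSelP, hb.1, hb.2])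
  · refine Or.inr (Or.inr ⟨rfl, ?_⟩)
    by_contra hb; push_neg at hb
    exact h (by norm_num [uniformSelP, hb.1, hb.2])

lemma step_in3 {a b : ℕ} (ha : In3 a) (h : uniformSelP a b ≠ 0)
    (h0 : b ≠ 0) (h4 : b ≠ 4) : In3 b := by
  rcases P_ne_zero_cases ha h with ⟨_, hb⟩ | ⟨_, hb⟩ | ⟨_, hb⟩ <;>
    rcases hb with rfl | rfl <;> simp_all [In3]

lemma step_exit {a b : ℕ} (ha : In3 a) (h : uniformSelP a b ≠ 0)
    (hb : ¬ In3 b) : b = 0 ∨ b = 4 := by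
  rcases P_ne_zero_cases ha h with ⟨_, h'⟩ | ⟨_, h'⟩ | ⟨_, h'⟩ <;>
    rcases h' with rfl | rfl <;> simp_all [In3]

/-- extend a path of horizon `N` by value `x` at time `N+1`, normalized to `0` beyond. -/
def pext (N x : ℕ) (p : ℕ → ℕ) : ℕ → ℕ :=
  fun m => if m ≤ N then p m else if m = N + 1 then x else 0

noncomputable def PF : ℕ → ℕ → Finset (ℕ → ℕ)
  | 0, x => {fun m => if m = 0 then x else 0}
  | (N + 1), x =>
      letI : DecidableEq (ℕ → ℕ) := Classical.decEq _
      (PF N 1).image (pext N x) ∪ (PF N 2).image (pext N x) ∪ (PF N 3).image (pext N x)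

lemma PF_prop : ∀ N x, ∀ p ∈ PF N x,
    (∀ m, m < N → In3 (p m)) ∧ p N = x ∧ (∀ m, N < m → p m = 0) := by
  intro N
  induction N with
  | zero =>
    intro x p hp
    simp only [PF, Finset.mem_singleton] at hp
    subst hp
    refine ⟨by omega, by simp, fun m hm => by simp [Nat.ne_of_gt hm]⟩
  | succ N ih =>
    intro x p hp
    simp only [PF, Finset.mem_union, Finset.mem_image] at hp
    have : ∃ y, In3 y ∧ ∃ q ∈ PF N y, pext N x q = p := by
      rcases hp with (⟨q, hq, hqp⟩ | ⟨q, hq, hqp⟩) | ⟨q, hq, hqp⟩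
      · exact ⟨1, Or.inl rfl, q, hq, hqp⟩
      · exact ⟨2, Or.inr (Or.inl rfl), q, hq, hqp⟩
      · exact ⟨3, Or.inr (Or.inr rfl), q, hq, hqp⟩
    obtain ⟨y, hy, q, hq, rfl⟩ := this
    obtain ⟨hIn, hNy, hzero⟩ := ih y q hq
    refine ⟨?_, ?_, ?_⟩
    · intro m hm
      have hmN : m ≤ N := by omega
      simp only [pext, if_pos hmN]
      rcases Nat.lt_or_ge m N with h | h
      · exact hIn m h
      · have : m = N := by omega
        subst this; rw [hNy]; exact hy
    · simp [pext]
    · intro m hm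
      simp only [pext]
      rw [if_neg (by omega), if_neg (by omega)]

lemma PF_complete : ∀ N (q : ℕ → ℕ), (∀ m, m < N → In3 (q m)) →
    (fun m => if m ≤ N then q m else 0) ∈ PF N (q N) := by
  intro N
  induction N with
  | zero =>
    intro q _
    simp only [PF, Finset.mem_singleton]
    funext m
    by_cases hm : m = 0 <;> simp [hm, Nat.le_zero]
  | succ N ih =>
    intro q hq
    have hqN : In3 (q N) := hq N (by omega)
    have hmem := ih q (fun m hm => hq m (by omega))
    have hext : (fun m => if m ≤ N + 1 then q m else 0)
        = pext N (q (N + 1)) (fun m => if m ≤ N then q m else 0) := by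
      funext m
      simp only [pext]
      by_cases h1 : m ≤ N
      · rw [if_pos (by omega), if_pos h1, if_pos h1]
      · by_cases h2 : m = N + 1
        · subst h2; rw [if_pos (by omega), if_neg h1, if_pos rfl]
        · rw [if_neg (by omega), if_neg h1, if_neg h2]
    classical
    simp only [PF, Finset.mem_union, Finset.mem_image]
    rcases hqN with h | h | h
    · exact Or.inl (Or.inl ⟨_, by rw [← h]; exact hmem, by rw [← hext]⟩)
    · exact Or.inl (Or.inr ⟨_, by rw [← h]; exact hmem, by rw [← hext]⟩)
    · exact Or.inr ⟨_, by rw [← h]; exact hmem, by rw [← hext]⟩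

lemma pw_nonneg (x₀ n : ℕ) (p : ℕ → ℕ) : 0 ≤ pw x₀ n p := by
  unfold pw
  apply mul_nonneg
  · split <;> norm_num
  · exact Finset.prod_nonneg fun i _ => uniformSelP_nonneg _ _

lemma pw_pext (x₀ N x : ℕ) (p : ℕ → ℕ) :
    pw x₀ (N + 1) (pext N x p) = pw x₀ N p * uniformSelP (p N) x := by
  unfold pw
  have h0 : pext N x p 0 = p 0 := by simp [pext]
  rw [h0, Finset.prod_range_succ]
  have hN : pext N x p N = p N := by simp [pext]
  have hN1 : pext N x p (N + 1) = x := by simp [pext]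
  rw [hN, hN1]
  have hprod : ∏ i ∈ Finset.range N, uniformSelP (pext N x p i) (pext N x p (i + 1))
      = ∏ i ∈ Finset.range N, uniformSelP (p i) (p (i + 1)) := by
    apply Finset.prod_congr rfl
    intro i hi
    rw [Finset.mem_range] at hi
    have h1 : pext N x p i = p i := by simp [pext, Nat.le_of_lt hi]
    have h2 : pext N x p (i + 1) = p (i + 1) := by simp [pext, Nat.succ_le_of_lt hi]
    rw [h1, h2]
  rw [hprod]; ring

lemma PF_sum (x₀ : ℕ) : ∀ N x, ∑ p ∈ PF N x, pw x₀ N p = uvec x₀ N x := by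
  intro N
  induction N with
  | zero =>
    intro x
    simp only [PF, Finset.sum_singleton, pw, uvec, Finset.range_zero,
      Finset.prod_empty, mul_one, if_true]
  | succ N ih =>
    intro x
    classical
    have key : ∀ y, ∑ p ∈ (PF N y).image (pext N x), pw x₀ (N + 1) p
        = uvec x₀ N y * uniformSelP y x := by
      intro y
      rw [Finset.sum_image ?hinj]
      case hinj =>
        intro q hq q' hq' heq
        have hz := (PF_prop N y q hq).2.2
        have hz' := (PF_prop N y q' hq').2.2
        funext m
        by_cases hm : m ≤ N
        · have := congrFun heq m
          simpa [pext, hm] using this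
        · rw [hz m (by omega), hz' m (by omega)]
      rw [← ih y, Finset.sum_mul]
      apply Finset.sum_congr rfl
      intro q hq
      rw [pw_pext, (PF_prop N y q hq).2.1]
    have hdisj12 : Disjoint ((PF N 1).image (pext N x)) ((PF N 2).image (pext N x)) := by
      rw [Finset.disjoint_left]
      rintro p hp1 hp2
      simp only [Finset.mem_image] at hp1 hp2
      obtain ⟨q, hq, rfl⟩ := hp1
      obtain ⟨q', hq', heq⟩ := hp2
      have h1 : q N = 1 := (PF_prop N 1 q hq).2.1
      have h2 : q' N = 2 := (PF_prop N 2 q' hq').2.1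
      have := congrFun heq N
      simp only [pext, le_refl, if_pos] at this
      omega
    have hdisj3 : Disjoint ((PF N 1).image (pext N x) ∪ (PF N 2).image (pext N x))
        ((PF N 3).image (pext N x)) := by
      rw [Finset.disjoint_left]
      rintro p hp1 hp3
      simp only [Finset.mem_union, Finset.mem_image] at hp1 hp3
      obtain ⟨q', hq', heq⟩ := hp3
      have h3 : q' N = 3 := (PF_prop N 3 q' hq').2.1
      rcases hp1 with ⟨q, hq, rfl⟩ | ⟨q, hq, rfl⟩
      · have h1 : q N = 1 := (PF_prop N 1 q hq).2.1
        have := congrFun heq N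
        simp only [pext, le_refl, if_pos] at this
        omega
      · have h2 : q N = 2 := (PF_prop N 2 q hq).2.1
        have := congrFun heq N
        simp only [pext, le_refl, if_pos] at this
        omega
    show ∑ p ∈ _ ∪ _ ∪ _, pw x₀ (N + 1) p = _
    rw [Finset.sum_union hdisj3, Finset.sum_union hdisj12, key 1, key 2, key 3]
    simp only [uvec]

section Measure

variable {Ω : Type*} [MeasurableSpace Ω] (Pr : Measure Ω) [IsProbabilityMeasure Pr]
  {x₀ : ℕ} {X : ℕ → Ω → ℕ}

lemma cyl_measure (hX : IsMarkovChainFrom Pr uniformSelP x₀ X) (n : ℕ) (p : ℕ → ℕ) :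
    Pr {ω | ∀ i ≤ n, X i ω = p i} = ENNReal.ofReal (pw x₀ n p) := by
  have h : (Pr {ω | ∀ i ≤ n, X i ω = p i}).toReal = pw x₀ n p := hX n p
  rw [← h, ENNReal.ofReal_toReal (measure_ne_top Pr _)]

lemma S_bound (hX : IsMarkovChainFrom Pr uniformSelP x₀ X) (N x : ℕ) :
    Pr {ω | (∀ m, m < N → In3 (X m ω)) ∧ X N ω = x}
      ≤ ENNReal.ofReal (uvec x₀ N x) := by
  have hsub : {ω | (∀ m, m < N → In3 (X m ω)) ∧ X N ω = x}
      ⊆ ⋃ p ∈ PF N x, {ω | ∀ i ≤ N, X i ω = p i} := by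
    intro ω hω
    obtain ⟨hI, hN⟩ := hω
    have hmem := PF_complete N (fun m => X m ω) hI
    simp only [hN] at hmem
    refine Set.mem_biUnion hmem ?_
    intro i hi
    simp only [Set.mem_setOf_eq, if_pos hi]
  calc Pr {ω | (∀ m, m < N → In3 (X m ω)) ∧ X N ω = x}
      ≤ Pr (⋃ p ∈ PF N x, {ω | ∀ i ≤ N, X i ω = p i}) := measure_mono hsub
    _ ≤ ∑ p ∈ PF N x, Pr {ω | ∀ i ≤ N, X i ω = p i} := measure_biUnion_finset_le _ _
    _ = ∑ p ∈ PF N x, ENNReal.ofReal (pw x₀ N p) :=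
        Finset.sum_congr rfl fun p _ => cyl_measure Pr hX N p
    _ = ENNReal.ofReal (∑ p ∈ PF N x, pw x₀ N p) :=
        (ENNReal.ofReal_sum_of_nonneg fun p _ => pw_nonneg x₀ N p).symm
    _ = ENNReal.ofReal (uvec x₀ N x) := by rw [PF_sum]

lemma X0_null (hX : IsMarkovChainFrom Pr uniformSelP x₀ X) :
    Pr {ω | X 0 ω ≠ x₀} = 0 := by
  have hsub : {ω | X 0 ω ≠ x₀}
      ⊆ ⋃ (y : ℕ) (_ : y ≠ x₀), {ω | ∀ i ≤ 0, X i ω = (fun _ => y) i} := by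
    intro ω hω
    refine Set.mem_iUnion.2 ⟨X 0 ω, Set.mem_iUnion.2 ⟨hω, fun i hi => ?_⟩⟩
    have : i = 0 := Nat.le_zero.mp hi
    rw [this]
  refine measure_mono_null hsub (measure_iUnion_null fun y => measure_iUnion_null fun hy => ?_)
  rw [cyl_measure Pr hX 0 (fun _ => y)]
  simp [pw, if_neg hy]

lemma step_null (hX : IsMarkovChainFrom Pr uniformSelP x₀ X) (i : ℕ) :
    Pr {ω | uniformSelP (X i ω) (X (i + 1) ω) = 0} = 0 := by
  set ev : (Fin (i + 2) → ℕ) → ℕ → ℕ :=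
    fun v m => if h : m < i + 2 then v ⟨m, h⟩ else 0 with hev
  have hsub : {ω | uniformSelP (X i ω) (X (i + 1) ω) = 0}
      ⊆ ⋃ (v : Fin (i + 2) → ℕ)
          (_ : uniformSelP (v ⟨i, by omega⟩) (v ⟨i + 1, by omega⟩) = 0),
          {ω | ∀ m ≤ i + 1, X m ω = ev v m} := by
    intro ω hω
    refine Set.mem_iUnion.2 ⟨fun j => X j.1 ω, Set.mem_iUnion.2 ⟨hω, fun m hm => ?_⟩⟩
    simp only [hev]
    rw [dif_pos (by omega)]
  refine measure_mono_null hsub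
    (measure_iUnion_null fun v => measure_iUnion_null fun hv => ?_)
  rw [cyl_measure Pr hX (i + 1) (ev v)]
  have hz : pw x₀ (i + 1) (ev v) = 0 := by
    unfold pw
    have : ∏ m ∈ Finset.range (i + 1), uniformSelP (ev v m) (ev v (m + 1)) = 0 := by
      apply Finset.prod_eq_zero (Finset.self_mem_range_succ i)
      have h1 : ev v i = v ⟨i, by omega⟩ := by simp only [hev]; rw [dif_pos (by omega)]
      have h2 : ev v (i + 1) = v ⟨i + 1, by omega⟩ := by
        simp only [hev]; rw [dif_pos (by omega)]
      rw [h1, h2, hv]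
    rw [this, mul_zero]
  rw [hz]
  simp

lemma bad_null (hX : IsMarkovChainFrom Pr uniformSelP x₀ X) :
    Pr {ω | X 0 ω ≠ x₀ ∨ ∃ j, uniformSelP (X j ω) (X (j + 1) ω) = 0} = 0 := by
  have hsub : {ω | X 0 ω ≠ x₀ ∨ ∃ j, uniformSelP (X j ω) (X (j + 1) ω) = 0}
      ⊆ {ω | X 0 ω ≠ x₀} ∪ ⋃ j, {ω | uniformSelP (X j ω) (X (j + 1) ω) = 0} := by
    rintro ω (h | ⟨j, hj⟩)
    · exact Or.inl h
    · exact Or.inr (Set.mem_iUnion.2 ⟨j, hj⟩)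
  refine measure_mono_null hsub (measure_union_null (X0_null Pr hX) ?_)
  exact measure_iUnion_null fun j => step_null Pr hX j

end Measure


/-- Lemma locallemma: for the Example 2 Uniform Selection chain
started at `x₀ ∈ {1, 2, 3}`, the probability `s(x₀)` of hitting 4 before 0
satisfies `s(1) = 3/7`, `s(2) = 4/7`, `s(3) = 13/21`. -/
theorem uniformSel_hit_four_before_zero
    {Ω : Type*} [MeasurableSpace Ω]
    (Pr : Measure Ω) [IsProbabilityMeasure Pr]
    (x₀ : ℕ) (hx₀ : x₀ ∈ ({1, 2, 3} : Set ℕ))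
    (X : ℕ → Ω → ℕ)
    (hX : IsMarkovChainFrom Pr uniformSelP x₀ X) :
    (Pr {ω | ∃ n : ℕ, X n ω = 4 ∧ ∀ m ≤ n, X m ω ≠ 0}).toReal
      = if x₀ = 1 then 3 / 7 else if x₀ = 2 then 4 / 7 else 13 / 21 := by
  classical
  have hIn3 : In3 x₀ := by
    simp only [Set.mem_insert_iff, Set.mem_singleton_iff] at hx₀
    exact hx₀
  set S : ℕ → ℕ → Set Ω :=
    fun N x => {ω | (∀ m, m < N → In3 (X m ω)) ∧ X N ω = x} with hS
  set B : Set Ω :=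
    {ω | X 0 ω ≠ x₀ ∨ ∃ j, uniformSelP (X j ω) (X (j + 1) ω) = 0} with hB
  set E : Set Ω := {ω | ∃ n : ℕ, X n ω = 4 ∧ ∀ m ≤ n, X m ω ≠ 0} with hE
  have hBnull : Pr B = 0 := bad_null Pr hX
  -- upper bound cover
  have hEsub : E ⊆ B ∪ ⋃ k, S k 4 := by
    intro ω hω
    by_cases hb : ω ∈ B
    · exact Or.inl hb
    · right
      simp only [hB, Set.mem_setOf_eq, not_or, not_exists, ne_eq, not_not] at hb
      obtain ⟨hx0, hleg⟩ := hb
      obtain ⟨n, hn4, hn0⟩ := hω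
      have hex : ∃ k, X k ω = 4 := ⟨n, hn4⟩
      set k := Nat.find hex with hk
      have hk4 : X k ω = 4 := Nat.find_spec hex
      have hkn : k ≤ n := Nat.find_min' hex hn4
      have hmin : ∀ m, m < k → X m ω ≠ 4 := fun m hm => Nat.find_min hex hm
      clear_value k
      have claim : ∀ m, m < k → In3 (X m ω) := by
        intro m
        induction m with
        | zero => intro _; rw [hx0]; exact hIn3
        | succ m ih =>
          intro hm
          have h1 : In3 (X m ω) := ih (by omega)
          refine step_in3 h1 (hleg m) (hn0 (m + 1) (by omega)) ?_
          exact hmin (m+1) hm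
      exact Set.mem_iUnion.2 ⟨k, claim, hk4⟩
  -- lower bound cover
  have hcover : ∀ K : ℕ, (Set.univ : Set Ω)
      ⊆ E ∪ B ∪ (⋃ k ∈ Finset.range (K + 1), S k 0) ∪ S K 1 ∪ S K 2 ∪ S K 3 := by
    intro K ω _
    by_cases hb : ω ∈ B
    · exact Or.inl (Or.inl (Or.inl (Or.inl (Or.inr hb))))
    simp only [hB, Set.mem_setOf_eq, not_or, not_exists, ne_eq, not_not] at hb
    obtain ⟨hx0, hleg⟩ := hb
    by_cases hstay : ∀ m, m ≤ K → In3 (X m ω)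
    · have hK := hstay K le_rfl
      have hmem : ∀ x, X K ω = x →
          ω ∈ S K x := fun x hx => ⟨fun m hm => hstay m (by omega), hx⟩
      rcases hK with h | h | h
      · exact Or.inl (Or.inl (Or.inr (hmem 1 h)))
      · exact Or.inl (Or.inr (hmem 2 h))
      · exact Or.inr (hmem 3 h)
    · push_neg at hstay
      obtain ⟨m0, hm0K, hm0⟩ := hstay
      have hex : ∃ m, ¬ In3 (X m ω) := ⟨m0, hm0⟩
      set k := Nat.find hex with hk
      have hknot : ¬ In3 (X k ω) := Nat.find_spec hex
      have hkK : k ≤ K := le_trans (Nat.find_min' hex hm0) hm0K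
      have hprev : ∀ m, m < k → In3 (X m ω) := fun m hm => not_not.1 (Nat.find_min hex hm)
      clear_value k
      have hk1 : 1 ≤ k := by
        rcases Nat.eq_zero_or_pos k with h | h
        · exfalso; apply hknot; rw [h, hx0]; exact hIn3
        · exact h
      obtain ⟨k', rfl⟩ : ∃ k', k = k' + 1 := ⟨k - 1, by omega⟩
      have hstep : X (k' + 1) ω = 0 ∨ X (k' + 1) ω = 4 :=
        step_exit (hprev k' (by omega)) (hleg k') hknot
      rcases hstep with h0 | h4
      · refine Or.inl (Or.inl (Or.inl (Or.inr ?_)))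
        refine Set.mem_biUnion (Finset.mem_range.2 (by omega)) ⟨hprev, h0⟩
      · refine Or.inl (Or.inl (Or.inl (Or.inl (Or.inl ?_))))
        refine ⟨k' + 1, h4, fun m hm => ?_⟩
        rcases Nat.lt_or_ge m (k' + 1) with h | h
        · have := hprev m h
          rcases this with h' | h' | h' <;> omega
        · have : m = k' + 1 := by omega
          rw [this, h4]; omega
  -- upper bound on the measure
  have hup : Pr E ≤ ENNReal.ofReal (sfun x₀ 0) := by
    have htsum : ∑' k, ENNReal.ofReal (uvec x₀ k 4) ≤ ENNReal.ofReal (sfun x₀ 0) := by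
      rw [ENNReal.tsum_eq_iSup_sum]
      refine iSup_le fun F => ?_
      have hFsub : F ⊆ Finset.range (F.sup id + 1) := by
        intro j hj
        have := Finset.le_sup (f := id) hj
        exact Finset.mem_range.2 (by simpa using Nat.lt_succ_of_le this)
      calc ∑ j ∈ F, ENNReal.ofReal (uvec x₀ j 4)
          ≤ ∑ j ∈ Finset.range (F.sup id + 1), ENNReal.ofReal (uvec x₀ j 4) :=
            Finset.sum_le_sum_of_subset hFsub
        _ = ENNReal.ofReal (∑ j ∈ Finset.range (F.sup id + 1), uvec x₀ j 4) :=
            (ENNReal.ofReal_sum_of_nonneg fun j _ => uvec_nonneg x₀ j 4).symm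
        _ = ENNReal.ofReal (sfun x₀ 0 - sfun x₀ (F.sup id)) := by rw [sum4 hIn3]
        _ ≤ ENNReal.ofReal (sfun x₀ 0) := by
            apply ENNReal.ofReal_le_ofReal
            have := sfun_nonneg x₀ (F.sup id); linarith
    calc Pr E ≤ Pr (B ∪ ⋃ k, S k 4) := measure_mono hEsub
      _ ≤ Pr B + Pr (⋃ k, S k 4) := measure_union_le _ _
      _ = Pr (⋃ k, S k 4) := by rw [hBnull, zero_add]
      _ ≤ ∑' k, Pr (S k 4) := measure_iUnion_le _
      _ ≤ ∑' k, ENNReal.ofReal (uvec x₀ k 4) :=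
          ENNReal.tsum_le_tsum fun k => S_bound Pr hX k 4
      _ ≤ ENNReal.ofReal (sfun x₀ 0) := htsum
  -- facts about sfun at 0
  have hr0 : rfun x₀ 0 = 1 := by
    rcases hIn3 with h | h | h <;> subst h <;> norm_num [rfun, uvec]
  have hs0le1 : sfun x₀ 0 ≤ 1 := by
    have := sfun_le_rfun x₀ 0; linarith
  -- lower bound on the measure
  have hlow : ∀ K : ℕ, sfun x₀ 0 - sfun x₀ K ≤ (Pr E).toReal := by
    intro K
    set c : ℝ := 1 - sfun x₀ 0 + sfun x₀ K with hc
    have hcnn : 0 ≤ c := by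
      have := sfun_nonneg x₀ K; simp only [hc]; linarith
    have hsum0 : ∑ j ∈ Finset.range (K + 1), uvec x₀ j 0
        + (uvec x₀ K 1 + uvec x₀ K 2 + uvec x₀ K 3) = c := by
      have h1 := sum04 hIn3 K
      have h2 := sum4 hIn3 K
      rw [Finset.sum_add_distrib] at h1
      simp only [rfun] at h1 hr0
      simp only [hc]
      linarith
    have hle : (1 : ENNReal) ≤ Pr E + ENNReal.ofReal c := by
      have hU : Pr (⋃ k ∈ Finset.range (K + 1), S k 0)
          ≤ ENNReal.ofReal (∑ j ∈ Finset.range (K + 1), uvec x₀ j 0) := by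
        calc Pr (⋃ k ∈ Finset.range (K + 1), S k 0)
            ≤ ∑ j ∈ Finset.range (K + 1), Pr (S j 0) := measure_biUnion_finset_le _ _
          _ ≤ ∑ j ∈ Finset.range (K + 1), ENNReal.ofReal (uvec x₀ j 0) :=
              Finset.sum_le_sum fun j _ => S_bound Pr hX j 0
          _ = ENNReal.ofReal (∑ j ∈ Finset.range (K + 1), uvec x₀ j 0) :=
              (ENNReal.ofReal_sum_of_nonneg fun j _ => uvec_nonneg x₀ j 0).symm
      calc (1 : ENNReal) = Pr Set.univ := measure_univ.symm
        _ ≤ Pr (E ∪ B ∪ (⋃ k ∈ Finset.range (K + 1), S k 0) ∪ S K 1 ∪ S K 2 ∪ S K 3) :=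
            measure_mono (hcover K)
        _ ≤ Pr (E ∪ B ∪ (⋃ k ∈ Finset.range (K + 1), S k 0) ∪ S K 1 ∪ S K 2) + Pr (S K 3) :=
            measure_union_le _ _
        _ ≤ (Pr (E ∪ B ∪ (⋃ k ∈ Finset.range (K + 1), S k 0) ∪ S K 1) + Pr (S K 2))
              + Pr (S K 3) := add_le_add_left (measure_union_le _ _) _
        _ ≤ ((Pr (E ∪ B ∪ (⋃ k ∈ Finset.range (K + 1), S k 0)) + Pr (S K 1)) + Pr (S K 2))
              + Pr (S K 3) := by
            exact add_le_add_left (add_le_add_left (measure_union_le _ _) _) _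
        _ ≤ (((Pr (E ∪ B) + Pr (⋃ k ∈ Finset.range (K + 1), S k 0)) + Pr (S K 1)) + Pr (S K 2))
              + Pr (S K 3) := by
            exact add_le_add_left (add_le_add_left (add_le_add_left (measure_union_le _ _) _) _) _
        _ ≤ (((Pr E + Pr B + Pr (⋃ k ∈ Finset.range (K + 1), S k 0)) + Pr (S K 1)) + Pr (S K 2))
              + Pr (S K 3) := by
            gcongr
            exact measure_union_le _ _
        _ = (((Pr E + Pr (⋃ k ∈ Finset.range (K + 1), S k 0)) + Pr (S K 1)) + Pr (S K 2))
              + Pr (S K 3) := by rw [hBnull, add_zero]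
        _ ≤ (((Pr E + ENNReal.ofReal (∑ j ∈ Finset.range (K + 1), uvec x₀ j 0))
              + ENNReal.ofReal (uvec x₀ K 1)) + ENNReal.ofReal (uvec x₀ K 2))
              + ENNReal.ofReal (uvec x₀ K 3) := by
            exact add_le_add (add_le_add (add_le_add (add_le_add_right hU _)
              (S_bound Pr hX K 1)) (S_bound Pr hX K 2)) (S_bound Pr hX K 3)
        _ = Pr E + ENNReal.ofReal c := by
            rw [add_assoc, add_assoc, add_assoc,
              ← ENNReal.ofReal_add (uvec_nonneg x₀ K 2) (uvec_nonneg x₀ K 3),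
              ← ENNReal.ofReal_add (uvec_nonneg x₀ K 1)
                (add_nonneg (uvec_nonneg x₀ K 2) (uvec_nonneg x₀ K 3)),
              ← ENNReal.ofReal_add
                (Finset.sum_nonneg fun j _ => uvec_nonneg x₀ j 0)
                (add_nonneg (uvec_nonneg x₀ K 1)
                  (add_nonneg (uvec_nonneg x₀ K 2) (uvec_nonneg x₀ K 3)))]
            congr 1
            rw [← hsum0]
            ring_nf
    have hfin : Pr E + ENNReal.ofReal c ≠ ⊤ :=
      ENNReal.add_ne_top.2 ⟨measure_ne_top Pr E, ENNReal.ofReal_ne_top⟩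
    have := ENNReal.toReal_mono hfin hle
    rw [ENNReal.toReal_one, ENNReal.toReal_add (measure_ne_top Pr E) ENNReal.ofReal_ne_top,
      ENNReal.toReal_ofReal hcnn] at this
    simp only [hc] at this
    linarith
  -- conclude
  have hupR : (Pr E).toReal ≤ sfun x₀ 0 :=
    ENNReal.toReal_le_of_le_ofReal (sfun_nonneg x₀ 0) hup
  have hdle : ∀ j : ℕ, sfun x₀ 0 - (Pr E).toReal ≤ (8 / 9 : ℝ) ^ j := by
    intro j
    have h1 := hlow (2 * j)
    have h2 := sfun_le_rfun x₀ (2 * j)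
    have h3 := rfun_geom x₀ j
    rw [hr0, mul_one] at h3
    linarith
  have htend : Filter.Tendsto (fun j : ℕ => (8 / 9 : ℝ) ^ j) Filter.atTop (nhds 0) :=
    tendsto_pow_atTop_nhds_zero_of_lt_one (by norm_num) (by norm_num)
  have hd0 : sfun x₀ 0 - (Pr E).toReal ≤ 0 :=
    ge_of_tendsto htend (Filter.Eventually.of_forall hdle)
  have heq : (Pr E).toReal = sfun x₀ 0 := by linarith
  rw [heq]
  rcases hIn3 with h | h | h <;> subst h <;> norm_num [sfun, uvec]
end

section
/- Let P be the Example 2 Uniform Selection transition matrix on the nonnegative integers, let a ≥ 1 be an integer, and let (X_n) be a Markov chain with transitions P started at 4a. Then the probability that the chain hits 4(a+1) before hitting 4(a-1), namely ℙ(∃ n, X_n = 4(a+1) and X_m ≠ 4(a-1) for all m ≤ n), equals 9/17. -/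
open MeasureTheory Classical

namespace USaux

lemma P_nonneg (x y : ℕ) : 0 ≤ uniformSelP x y := by
  unfold uniformSelP; split_ifs <;> norm_num

lemma P_zero (y : ℕ) : uniformSelP 0 y = if y = 1 then 1 else 0 := by
  unfold uniformSelP; simp

lemma P_eq_zero {x y : ℕ} (h1 : y ≠ x + 1) (h2 : y ≠ x - 1) : uniformSelP x y = 0 := by
  unfold uniformSelP; split_ifs with h3 h4 h5 h6 h7 h8 h9 <;> first | omega | rfl

lemma P_row {x : ℕ} (hx : x ≠ 0) :
    uniformSelP x (x - 1) + uniformSelP x (x + 1) = 1 := by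
  have h : x + 1 ≠ x - 1 := by omega
  unfold uniformSelP
  split_ifs <;> first | omega | norm_num

lemma P_mod0 {x : ℕ} (hx : x ≠ 0) (h : x % 4 = 0) :
    uniformSelP x (x - 1) = 1/2 ∧ uniformSelP x (x + 1) = 1/2 := by
  unfold uniformSelP; split_ifs <;> first | omega | norm_num

lemma P_mod12 {x : ℕ} (hx : x ≠ 0) (h : x % 4 = 1 ∨ x % 4 = 2) :
    uniformSelP x (x - 1) = 1/4 ∧ uniformSelP x (x + 1) = 3/4 := by
  have h1 : x + 1 ≠ x - 1 := by omega
  unfold uniformSelP; split_ifs <;> first | omega | norm_num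

lemma P_mod3 {x : ℕ} (hx : x ≠ 0) (h : x % 4 = 3) :
    uniformSelP x (x - 1) = 8/9 ∧ uniformSelP x (x + 1) = 1/9 := by
  have h1 : x + 1 ≠ x - 1 := by omega
  unfold uniformSelP; split_ifs <;> first | omega | norm_num



noncomputable def gfun (t b : ℕ) (T : ℕ → Prop) : ℕ → ℕ → ℝ
  | 0, x => if T x then 1 else 0
  | n+1, x =>
    if x = t ∨ x = b then 0
    else if x = 0 then gfun t b T n 1
    else uniformSelP x (x - 1) * gfun t b T n (x - 1)
         + uniformSelP x (x + 1) * gfun t b T n (x + 1)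

lemma gfun_zero (t b : ℕ) (T : ℕ → Prop) (x : ℕ) :
    gfun t b T 0 x = if T x then 1 else 0 := rfl

lemma gfun_succ (t b : ℕ) (T : ℕ → Prop) (n x : ℕ) :
    gfun t b T (n+1) x =
      if x = t ∨ x = b then 0
      else if x = 0 then gfun t b T n 1
      else uniformSelP x (x - 1) * gfun t b T n (x - 1)
           + uniformSelP x (x + 1) * gfun t b T n (x + 1) := rfl

lemma gfun_nonneg (t b : ℕ) (T : ℕ → Prop) : ∀ n x, 0 ≤ gfun t b T n x := by
  intro n
  induction n with
  | zero => intro x; rw [gfun_zero]; split_ifs <;> norm_num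
  | succ n ih =>
    intro x
    rw [gfun_succ]
    split_ifs with h1 h2
    · exact le_rfl
    · exact ih 1
    · exact add_nonneg (mul_nonneg (USaux.P_nonneg _ _) (ih _))
        (mul_nonneg (USaux.P_nonneg _ _) (ih _))



lemma gfun_total (t b : ℕ) (hne : t ≠ b) :
    ∀ n x, (∑ m ∈ Finset.range (n+1), gfun t b (· = t) m x)
      + (∑ m ∈ Finset.range (n+1), gfun t b (· = b) m x)
      + gfun t b (fun y => ¬(y = t ∨ y = b)) n x = 1 := by
  intro n
  induction n with
  | zero =>
    intro x
    simp only [Finset.sum_range_succ, Finset.sum_range_zero, gfun_zero, zero_add]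
    by_cases h1 : x = t
    · rw [if_pos h1, if_neg (by rw [h1]; exact hne), if_neg (by push_neg; exact Or.inl h1)]
      ring
    · by_cases h2 : x = b
      · rw [if_neg h1, if_pos h2, if_neg (by push_neg; exact Or.inr h2)]; ring
      · rw [if_neg h1, if_neg h2, if_pos (by push_neg; exact ⟨h1, h2⟩)]; ring
  | succ n ih =>
    intro x
    rw [Finset.sum_range_succ' (fun m => gfun t b (· = t) m x) (n+1),
        Finset.sum_range_succ' (fun m => gfun t b (· = b) m x) (n+1)]
    by_cases hbd : x = t ∨ x = b
    · have hz : ∀ (T : ℕ → Prop) m, gfun t b T (m+1) x = 0 := fun T m => by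
        rw [gfun_succ, if_pos hbd]
      rw [Finset.sum_congr rfl (fun m _ => hz _ m), Finset.sum_congr rfl (fun m _ => hz _ m),
        gfun_succ, if_pos hbd, gfun_zero, gfun_zero]
      rcases hbd with h | h
      · rw [if_pos h, if_neg (by rw [h]; exact hne)]; simp
      · rw [if_neg (by rw [h]; exact fun hh => hne hh.symm), if_pos h]; simp
    · by_cases hx0 : x = 0
      · have hz : ∀ (T : ℕ → Prop) m, gfun t b T (m+1) x = gfun t b T m 1 := fun T m => by
          rw [gfun_succ, if_neg hbd, if_pos hx0]
        rw [Finset.sum_congr rfl (fun m _ => hz _ m), Finset.sum_congr rfl (fun m _ => hz _ m),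
          gfun_succ, if_neg hbd, if_pos hx0, gfun_zero, gfun_zero]
        push_neg at hbd
        rw [if_neg hbd.1, if_neg hbd.2]
        have := ih 1
        linarith
      · have hz : ∀ (T : ℕ → Prop) m, gfun t b T (m+1) x
            = uniformSelP x (x - 1) * gfun t b T m (x - 1)
              + uniformSelP x (x + 1) * gfun t b T m (x + 1) := fun T m => by
          rw [gfun_succ, if_neg hbd, if_neg hx0]
        rw [Finset.sum_congr rfl (fun m _ => hz _ m), Finset.sum_congr rfl (fun m _ => hz _ m),
          gfun_succ, if_neg hbd, if_neg hx0, gfun_zero, gfun_zero]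
        push_neg at hbd
        rw [if_neg hbd.1, if_neg hbd.2]
        rw [Finset.sum_add_distrib, Finset.sum_add_distrib, ← Finset.mul_sum, ← Finset.mul_sum,
          ← Finset.mul_sum, ← Finset.mul_sum]
        have h1 := ih (x - 1)
        have h2 := ih (x + 1)
        have hrow := USaux.P_row hx0
        linear_combination uniformSelP x (x - 1) * h1 + uniformSelP x (x + 1) * h2
          + gfun t b (fun y => ¬(y = t ∨ y = b)) n (x+1) * 0 + hrow
          - hrow + uniformSelP x (x-1) * 1 + uniformSelP x (x+1) * 1 - 1 + hrow


lemma gfun_partial_le (t b : ℕ) (hne : t ≠ b) (T : ℕ → Prop)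
    (hT : T = (· = t) ∨ T = (· = b)) (n x : ℕ) :
    ∑ m ∈ Finset.range n, gfun t b T m x ≤ 1 := by
  have hmono : ∑ m ∈ Finset.range n, gfun t b T m x
      ≤ ∑ m ∈ Finset.range (n+1), gfun t b T m x :=
    Finset.sum_le_sum_of_subset_of_nonneg (Finset.range_subset_range.2 (Nat.le_succ n))
      (fun i _ _ => gfun_nonneg t b T i x)
  have htot := gfun_total t b hne n x
  have h1 : 0 ≤ ∑ m ∈ Finset.range (n+1), gfun t b (· = t) m x :=
    Finset.sum_nonneg fun i _ => gfun_nonneg _ _ _ i x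
  have h2 : 0 ≤ ∑ m ∈ Finset.range (n+1), gfun t b (· = b) m x :=
    Finset.sum_nonneg fun i _ => gfun_nonneg _ _ _ i x
  have h3 : 0 ≤ gfun t b (fun y => ¬(y = t ∨ y = b)) n x := gfun_nonneg _ _ _ n x
  rcases hT with h | h <;> subst h <;> linarith

lemma gfun_summable (t b : ℕ) (hne : t ≠ b) (T : ℕ → Prop)
    (hT : T = (· = t) ∨ T = (· = b)) (x : ℕ) :
    Summable (fun n => gfun t b T n x) :=
  summable_of_sum_range_le (fun n => gfun_nonneg t b T n x)
    (fun n => gfun_partial_le t b hne T hT n x)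

lemma tsum_gfun_bd (t b : ℕ) (T : ℕ → Prop) (x : ℕ) (hx : x = t ∨ x = b) :
    ∑' n, gfun t b T n x = if T x then 1 else 0 := by
  rw [tsum_eq_single 0 (fun n hn => ?_)]
  · exact gfun_zero t b T x
  · cases n with
    | zero => exact absurd rfl hn
    | succ m => rw [gfun_succ, if_pos hx]

lemma tsum_gfun_rec (t b : ℕ) (T : ℕ → Prop)
    (hS : ∀ y, Summable (fun n => gfun t b T n y)) (x : ℕ)
    (hbd : ¬(x = t ∨ x = b)) (hx0 : x ≠ 0) (hT : ¬ T x) :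
    ∑' n, gfun t b T n x
      = uniformSelP x (x - 1) * ∑' n, gfun t b T n (x - 1)
        + uniformSelP x (x + 1) * ∑' n, gfun t b T n (x + 1) := by
  rw [Summable.tsum_eq_zero_add (hS x)]
  have h0 : gfun t b T 0 x = 0 := by rw [gfun_zero, if_neg hT]
  have hsucc : ∀ n : ℕ, gfun t b T (n+1) x
      = uniformSelP x (x - 1) * gfun t b T n (x - 1)
        + uniformSelP x (x + 1) * gfun t b T n (x + 1) := fun n => by
    rw [gfun_succ, if_neg hbd, if_neg hx0]
  rw [h0, zero_add, tsum_congr hsucc,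
    Summable.tsum_add ((hS (x-1)).mul_left _) ((hS (x+1)).mul_left _),
    tsum_mul_left, tsum_mul_left]


lemma cons_forall_iff (t b : ℕ) {n : ℕ} (y : ℕ) (r : Fin (n+1) → ℕ) :
    (∀ i : Fin (n+1), ¬((Fin.cons y r : Fin (n+2) → ℕ) i.castSucc = t
        ∨ (Fin.cons y r : Fin (n+2) → ℕ) i.castSucc = b))
      ↔ (¬(y = t ∨ y = b)) ∧ ∀ j : Fin n, ¬(r j.castSucc = t ∨ r j.castSucc = b) := by
  constructor
  · intro h
    refine ⟨by simpa using h 0, fun j => ?_⟩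
    have := h j.succ
    rwa [← Fin.succ_castSucc, Fin.cons_succ] at this
  · rintro ⟨h0, h⟩ i
    induction i using Fin.cases with
    | zero => simpa using h0
    | succ j => rw [← Fin.succ_castSucc, Fin.cons_succ]; exact h j

lemma cons_last (n : ℕ) (y : ℕ) (r : Fin (n+1) → ℕ) :
    (Fin.cons y r : Fin (n+2) → ℕ) (Fin.last (n+1)) = r (Fin.last n) := by
  rw [← Fin.succ_last, Fin.cons_succ]

lemma cons_prod (n : ℕ) (y : ℕ) (r : Fin (n+1) → ℕ) :
    (∏ i : Fin (n+1), uniformSelP ((Fin.cons y r : Fin (n+2) → ℕ) i.castSucc)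
        ((Fin.cons y r : Fin (n+2) → ℕ) i.succ))
      = uniformSelP y (r 0)
        * ∏ j : Fin n, uniformSelP (r j.castSucc) (r j.succ) := by
  rw [Fin.prod_univ_succ]
  have h2 : ∀ j : Fin n,
      uniformSelP ((Fin.cons y r : Fin (n+2) → ℕ) j.succ.castSucc)
        ((Fin.cons y r : Fin (n+2) → ℕ) j.succ.succ)
      = uniformSelP (r j.castSucc) (r j.succ) := fun j => by
    rw [← Fin.succ_castSucc, Fin.cons_succ, Fin.cons_succ]
  rw [Finset.prod_congr rfl fun j _ => h2 j]
  congr 1 <;> simp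

lemma path_sum (t b : ℕ) (T : ℕ → Prop) :
    ∀ n x : ℕ,
      (∑' q : Fin (n+1) → ℕ,
        if q 0 = x ∧ (∀ i : Fin n, ¬(q i.castSucc = t ∨ q i.castSucc = b))
            ∧ T (q (Fin.last n))
        then ENNReal.ofReal (∏ i : Fin n, uniformSelP (q i.castSucc) (q i.succ))
        else 0)
      = ENNReal.ofReal (gfun t b T n x) := by
  intro n
  induction n with
  | zero =>
    intro x
    rw [← (Equiv.funUnique (Fin 1) ℕ).symm.tsum_eq, gfun_zero]
    have h1 : ∀ y : ℕ, ((Equiv.funUnique (Fin 1) ℕ).symm y : Fin 1 → ℕ) = fun _ => y :=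
      fun y => rfl
    simp only [h1]
    have h2 : ∀ y : ℕ,
        (if (fun _ : Fin 1 => y) 0 = x ∧ (∀ i : Fin 0, ¬((fun _ : Fin 1 => y) i.castSucc = t
            ∨ (fun _ : Fin 1 => y) i.castSucc = b)) ∧ T ((fun _ : Fin 1 => y) (Fin.last 0))
          then ENNReal.ofReal (∏ i : Fin 0, uniformSelP ((fun _ : Fin 1 => y) i.castSucc)
            ((fun _ : Fin 1 => y) i.succ)) else 0)
        = (if y = x ∧ T y then 1 else 0) := by
      intro y
      simp only [Fin.prod_univ_zero, ENNReal.ofReal_one]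
      exact if_congr (by simp) rfl rfl
    rw [tsum_congr h2, tsum_eq_single x (fun y hy => if_neg (fun h => hy h.1))]
    by_cases hT : T x
    · rw [if_pos ⟨rfl, hT⟩, if_pos hT, ENNReal.ofReal_one]
    · rw [if_neg (fun h => hT h.2), if_neg hT, ENNReal.ofReal_zero]
  | succ n ih =>
    intro x
    rw [← (Fin.consEquiv (fun _ : Fin (n+2) => ℕ)).tsum_eq, ENNReal.tsum_prod']
    simp only [Fin.consEquiv_apply]
    rw [tsum_eq_single x ?side]
    case side =>
      intro y hy
      refine ENNReal.tsum_eq_zero.2 fun r => if_neg fun hc => hy ?_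
      simpa using hc.1
    by_cases hbd : x = t ∨ x = b
    · rw [ENNReal.tsum_eq_zero.2 fun r => if_neg fun hc => ?_, gfun_succ, if_pos hbd,
        ENNReal.ofReal_zero]
      exact (((cons_forall_iff t b x r).1 hc.2.1).1) hbd
    · have hterm : ∀ r : Fin (n+1) → ℕ,
          (if (Fin.cons x r : Fin (n+2) → ℕ) 0 = x
              ∧ (∀ i : Fin (n+1), ¬((Fin.cons x r : Fin (n+2) → ℕ) i.castSucc = t
                  ∨ (Fin.cons x r : Fin (n+2) → ℕ) i.castSucc = b))
              ∧ T ((Fin.cons x r : Fin (n+2) → ℕ) (Fin.last (n+1)))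
            then ENNReal.ofReal (∏ i : Fin (n+1),
              uniformSelP ((Fin.cons x r : Fin (n+2) → ℕ) i.castSucc)
                ((Fin.cons x r : Fin (n+2) → ℕ) i.succ)) else 0)
          = (if (∀ j : Fin n, ¬(r j.castSucc = t ∨ r j.castSucc = b)) ∧ T (r (Fin.last n))
            then ENNReal.ofReal (uniformSelP x (r 0))
              * ENNReal.ofReal (∏ j : Fin n, uniformSelP (r j.castSucc) (r j.succ))
            else 0) := by
        intro r
        refine if_congr ?_ ?_ rfl
        · rw [Fin.cons_zero, cons_forall_iff t b x r, cons_last]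
          constructor
          · rintro ⟨-, ⟨-, h2⟩, h3⟩; exact ⟨h2, h3⟩
          · rintro ⟨h2, h3⟩; exact ⟨rfl, ⟨hbd, h2⟩, h3⟩
        · rw [cons_prod, ENNReal.ofReal_mul (USaux.P_nonneg _ _)]
      rw [tsum_congr hterm]
      have hsplit : ∀ r : Fin (n+1) → ℕ,
          (if (∀ j : Fin n, ¬(r j.castSucc = t ∨ r j.castSucc = b)) ∧ T (r (Fin.last n))
            then ENNReal.ofReal (uniformSelP x (r 0))
              * ENNReal.ofReal (∏ j : Fin n, uniformSelP (r j.castSucc) (r j.succ))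
            else 0)
          = ∑' z : ℕ, (if r 0 = z then
              ENNReal.ofReal (uniformSelP x z) *
              (if r 0 = z ∧ (∀ j : Fin n, ¬(r j.castSucc = t ∨ r j.castSucc = b))
                  ∧ T (r (Fin.last n))
                then ENNReal.ofReal (∏ j : Fin n, uniformSelP (r j.castSucc) (r j.succ))
                else 0) else 0) := by
        intro r
        rw [tsum_eq_single (r 0) (fun z hz => if_neg (fun h => hz h.symm)), if_pos rfl]
        by_cases hc : (∀ j : Fin n, ¬(r j.castSucc = t ∨ r j.castSucc = b)) ∧ T (r (Fin.last n))
        · rw [if_pos hc, if_pos ⟨rfl, hc⟩]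
        · rw [if_neg hc, if_neg (fun h => hc h.2), mul_zero]
      rw [tsum_congr hsplit, ENNReal.tsum_comm]
      have hinner : ∀ z : ℕ,
          (∑' r : Fin (n+1) → ℕ, (if r 0 = z then
              ENNReal.ofReal (uniformSelP x z) *
              (if r 0 = z ∧ (∀ j : Fin n, ¬(r j.castSucc = t ∨ r j.castSucc = b))
                  ∧ T (r (Fin.last n))
                then ENNReal.ofReal (∏ j : Fin n, uniformSelP (r j.castSucc) (r j.succ))
                else 0) else 0))
          = ENNReal.ofReal (uniformSelP x z) * ENNReal.ofReal (gfun t b T n z) := by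
        intro z
        rw [← ih z, ← ENNReal.tsum_mul_left]
        refine tsum_congr fun r => ?_
        by_cases h1 : r 0 = z
        · rw [if_pos h1]
        · rw [if_neg h1, if_neg (fun hc => h1 hc.1), mul_zero]
      rw [tsum_congr hinner]
      by_cases hx0 : x = 0
      · subst hx0
        rw [tsum_eq_single 1 (fun z hz => ?_)]
        · rw [USaux.P_zero, if_pos rfl, ENNReal.ofReal_one, one_mul, gfun_succ,
            if_neg hbd, if_pos rfl]
        · rw [USaux.P_zero, if_neg hz, ENNReal.ofReal_zero, zero_mul]
      · rw [tsum_eq_sum (s := {x - 1, x + 1}) (fun z hz => ?_)]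
        · rw [Finset.sum_pair (by omega : x - 1 ≠ x + 1), gfun_succ, if_neg hbd, if_neg hx0,
            ← ENNReal.ofReal_mul (USaux.P_nonneg _ _), ← ENNReal.ofReal_mul (USaux.P_nonneg _ _),
            ← ENNReal.ofReal_add (mul_nonneg (USaux.P_nonneg _ _) (gfun_nonneg _ _ _ _ _))
              (mul_nonneg (USaux.P_nonneg _ _) (gfun_nonneg _ _ _ _ _))]
        · simp only [Finset.mem_insert, Finset.mem_singleton] at hz
          push_neg at hz
          rw [USaux.P_eq_zero hz.2 hz.1, ENNReal.ofReal_zero, zero_mul]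


end USaux

namespace USaux

open MeasureTheory

lemma cyl_meas {Ω : Type*} [MeasurableSpace Ω] (Pr : Measure Ω) [IsProbabilityMeasure Pr]
    (a : ℕ) (X : ℕ → Ω → ℕ) (hX : IsMarkovChainFrom Pr uniformSelP (4 * a) X)
    (n : ℕ) (q : Fin (n+1) → ℕ) :
    Pr {ω | ∀ i : Fin (n+1), X i ω = q i}
      = ENNReal.ofReal ((if q 0 = 4 * a then (1:ℝ) else 0)
          * ∏ i : Fin n, uniformSelP (q i.castSucc) (q i.succ)) := by
  set p : ℕ → ℕ := fun m => if h : m < n + 1 then q ⟨m, h⟩ else 0 with hp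
  have hset : {ω | ∀ i ≤ n, X i ω = p i} = {ω | ∀ i : Fin (n+1), X i ω = q i} := by
    ext ω
    constructor
    · intro h i
      have hi : (i : ℕ) ≤ n := Nat.lt_succ_iff.mp i.isLt
      have := h i hi
      rw [this, hp]
      simp only [dif_pos i.isLt]
    · intro h i hi
      have := h ⟨i, Nat.lt_succ_of_le hi⟩
      rw [hp]
      simp only [dif_pos (Nat.lt_succ_of_le hi)]
      exact this
  have h0 : p 0 = q 0 := by rw [hp]; simp
  have hprod : ∏ i ∈ Finset.range n, uniformSelP (p i) (p (i + 1))
      = ∏ i : Fin n, uniformSelP (q i.castSucc) (q i.succ) := by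
    rw [← Fin.prod_univ_eq_prod_range (fun i => uniformSelP (p i) (p (i + 1))) n]
    refine Finset.prod_congr rfl fun i _ => ?_
    have h1 : p i = q i.castSucc := by
      rw [hp]; simp only [dif_pos (Nat.lt_succ_of_lt i.isLt)]; rfl
    have h2 : p (i + 1) = q i.succ := by
      rw [hp]; simp only [dif_pos (Nat.succ_lt_succ i.isLt)]; rfl
    rw [h1, h2]
  have hXn := hX n p
  rw [hset] at hXn
  rw [← ENNReal.ofReal_toReal (measure_ne_top Pr {ω | ∀ i : Fin (n+1), X i ω = q i}),
    hXn, h0, hprod]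

lemma cyl_bound {Ω : Type*} [MeasurableSpace Ω] (Pr : Measure Ω) [IsProbabilityMeasure Pr]
    (a : ℕ) (X : ℕ → Ω → ℕ) (hX : IsMarkovChainFrom Pr uniformSelP (4 * a) X)
    (t b : ℕ) (T : ℕ → Prop) (n : ℕ) :
    Pr {ω | (∀ m < n, ¬(X m ω = t ∨ X m ω = b)) ∧ T (X n ω)}
      ≤ ENNReal.ofReal (gfun t b T n (4 * a)) := by
  have hcover : {ω | (∀ m < n, ¬(X m ω = t ∨ X m ω = b)) ∧ T (X n ω)}
      ⊆ (⋃ y : ℕ, {ω | X 0 ω = y ∧ y ≠ 4 * a})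
        ∪ ⋃ q : Fin (n+1) → ℕ,
            {ω | (q 0 = 4 * a ∧ (∀ i : Fin n, ¬(q i.castSucc = t ∨ q i.castSucc = b))
                ∧ T (q (Fin.last n)))
              ∧ ∀ i : Fin (n+1), X i ω = q i} := by
    intro ω hω
    by_cases h0 : X 0 ω = 4 * a
    · right
      refine Set.mem_iUnion.2 ⟨fun i : Fin (n+1) => X i ω, ⟨⟨h0, fun i => ?_, ?_⟩, fun i => rfl⟩⟩
      · simpa using hω.1 i i.isLt
      · simpa using hω.2
    · left
      exact Set.mem_iUnion.2 ⟨X 0 ω, rfl, h0⟩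
  have hzero : Pr (⋃ y : ℕ, {ω | X 0 ω = y ∧ y ≠ 4 * a}) = 0 := by
    refine measure_iUnion_null fun y => ?_
    by_cases hy : y = 4 * a
    · have : {ω | X 0 ω = y ∧ y ≠ 4 * a} = (∅ : Set Ω) := by
        ext ω; simp [hy]
      rw [this, measure_empty]
    · have hXy := hX 0 (fun _ => y)
      simp only [Finset.range_zero, Finset.prod_empty, mul_one, if_neg hy] at hXy
      have h2 : Pr {ω | ∀ i ≤ 0, X i ω = y} = 0 := by
        rcases (ENNReal.toReal_eq_zero_iff _).1 hXy with h | h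
        · exact h
        · exact absurd h (measure_ne_top Pr _)
      refine measure_mono_null ?_ h2
      intro ω hω i hi
      interval_cases i
      exact hω.1
  have hq : Pr (⋃ q : Fin (n+1) → ℕ,
      {ω | (q 0 = 4 * a ∧ (∀ i : Fin n, ¬(q i.castSucc = t ∨ q i.castSucc = b))
          ∧ T (q (Fin.last n)))
        ∧ ∀ i : Fin (n+1), X i ω = q i})
      ≤ ENNReal.ofReal (gfun t b T n (4 * a)) := by
    refine le_trans (measure_iUnion_le _) ?_
    rw [← path_sum t b T n (4 * a)]
    refine ENNReal.tsum_le_tsum fun q => ?_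
    by_cases hc : q 0 = 4 * a ∧ (∀ i : Fin n, ¬(q i.castSucc = t ∨ q i.castSucc = b))
        ∧ T (q (Fin.last n))
    · rw [if_pos hc]
      have hsets : {ω | (q 0 = 4 * a ∧ (∀ i : Fin n, ¬(q i.castSucc = t ∨ q i.castSucc = b))
          ∧ T (q (Fin.last n))) ∧ ∀ i : Fin (n+1), X i ω = q i}
          = {ω | ∀ i : Fin (n+1), X i ω = q i} := by
        ext ω; simp [hc]
      rw [hsets, cyl_meas Pr a X hX n q, if_pos hc.1, one_mul]
    · have hsets : {ω | (q 0 = 4 * a ∧ (∀ i : Fin n, ¬(q i.castSucc = t ∨ q i.castSucc = b))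
          ∧ T (q (Fin.last n))) ∧ ∀ i : Fin (n+1), X i ω = q i} = (∅ : Set Ω) := by
        ext ω; simp only [Set.mem_setOf_eq, Set.mem_empty_iff_false, iff_false]
        exact fun h => hc h.1
      rw [hsets, measure_empty, if_neg hc]
  calc Pr {ω | (∀ m < n, ¬(X m ω = t ∨ X m ω = b)) ∧ T (X n ω)}
      ≤ Pr ((⋃ y : ℕ, {ω | X 0 ω = y ∧ y ≠ 4 * a})
        ∪ ⋃ q : Fin (n+1) → ℕ,
            {ω | (q 0 = 4 * a ∧ (∀ i : Fin n, ¬(q i.castSucc = t ∨ q i.castSucc = b))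
                ∧ T (q (Fin.last n)))
              ∧ ∀ i : Fin (n+1), X i ω = q i}) := measure_mono hcover
    _ ≤ _ + _ := measure_union_le _ _
    _ ≤ ENNReal.ofReal (gfun t b T n (4 * a)) := by rw [hzero, zero_add]; exact hq

end USaux

set_option maxHeartbeats 2000000 in
open USaux MeasureTheory Filter ENNReal in
/-- Lemma fourslemma: for the Example 2 Uniform Selection chain
started at `4a` with `a ≥ 1`, the probability of hitting `4(a+1)` before
`4(a-1)` equals `9/17`. -/
theorem uniformSel_up_probability
    {Ω : Type*} [MeasurableSpace Ω]
    (Pr : Measure Ω) [IsProbabilityMeasure Pr]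
    (a : ℕ) (ha : 1 ≤ a)
    (X : ℕ → Ω → ℕ)
    (hX : IsMarkovChainFrom Pr uniformSelP (4 * a) X) :
    (Pr {ω | ∃ n : ℕ, X n ω = 4 * (a + 1) ∧ ∀ m ≤ n, X m ω ≠ 4 * (a - 1)}).toReal
      = 9 / 17 := by
  classical
  set t : ℕ := 4 * (a + 1) with hts
  set b : ℕ := 4 * (a - 1) with hbs
  have hne : t ≠ b := by omega
  set Tt : ℕ → Prop := fun y => y = t with hTt
  set Tb : ℕ → Prop := fun y => y = b with hTb
  set TI : ℕ → Prop := fun y => ¬(y = t ∨ y = b) with hTI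
  have hSU : ∀ y, Summable (fun n => gfun t b Tt n y) :=
    fun y => gfun_summable t b hne Tt (Or.inl rfl) y
  have hSV : ∀ y, Summable (fun n => gfun t b Tb n y) :=
    fun y => gfun_summable t b hne Tb (Or.inr rfl) y
  -- boundary values
  have hUt : (∑' n, gfun t b Tt n t) = 1 := by
    rw [tsum_gfun_bd t b Tt t (Or.inl rfl), if_pos rfl]
  have hUb : (∑' n, gfun t b Tt n b) = 0 := by
    rw [tsum_gfun_bd t b Tt b (Or.inr rfl), if_neg (by omega : ¬ (b = t))]
  have hVt : (∑' n, gfun t b Tb n t) = 0 := by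
    rw [tsum_gfun_bd t b Tb t (Or.inl rfl), if_neg (by omega : ¬ (t = b))]
  have hVb : (∑' n, gfun t b Tb n b) = 1 := by
    rw [tsum_gfun_bd t b Tb b (Or.inr rfl), if_pos rfl]
  -- interior recursion equations for U
  have eU1 : (∑' n, gfun t b Tt n (4*a-3))
      = 1/4 * (∑' n, gfun t b Tt n b) + 3/4 * (∑' n, gfun t b Tt n (4*a-2)) := by
    have h := tsum_gfun_rec t b Tt hSU (4*a-3) (by omega) (by omega) (by omega)
    have hm := USaux.P_mod12 (x := 4*a-3) (by omega) (by omega)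
    rw [hm.1, hm.2, (show (4*a-3:ℕ)-1 = b by omega), (show (4*a-3:ℕ)+1 = 4*a-2 by omega)] at h
    exact h
  have eU2 : (∑' n, gfun t b Tt n (4*a-2))
      = 1/4 * (∑' n, gfun t b Tt n (4*a-3)) + 3/4 * (∑' n, gfun t b Tt n (4*a-1)) := by
    have h := tsum_gfun_rec t b Tt hSU (4*a-2) (by omega) (by omega) (by omega)
    have hm := USaux.P_mod12 (x := 4*a-2) (by omega) (by omega)
    rw [hm.1, hm.2, (show (4*a-2:ℕ)-1 = 4*a-3 by omega), (show (4*a-2:ℕ)+1 = 4*a-1 by omega)] at h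
    exact h
  have eU3 : (∑' n, gfun t b Tt n (4*a-1))
      = 8/9 * (∑' n, gfun t b Tt n (4*a-2)) + 1/9 * (∑' n, gfun t b Tt n (4*a)) := by
    have h := tsum_gfun_rec t b Tt hSU (4*a-1) (by omega) (by omega) (by omega)
    have hm := USaux.P_mod3 (x := 4*a-1) (by omega) (by omega)
    rw [hm.1, hm.2, (show (4*a-1:ℕ)-1 = 4*a-2 by omega), (show (4*a-1:ℕ)+1 = 4*a by omega)] at h
    exact h
  have eU4 : (∑' n, gfun t b Tt n (4*a))
      = 1/2 * (∑' n, gfun t b Tt n (4*a-1)) + 1/2 * (∑' n, gfun t b Tt n (4*a+1)) := by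
    have h := tsum_gfun_rec t b Tt hSU (4*a) (by omega) (by omega) (by omega)
    have hm := USaux.P_mod0 (x := 4*a) (by omega) (by omega)
    rw [hm.1, hm.2, (show (4*a:ℕ)-1 = 4*a-1 by omega)] at h
    exact h
  have eU5 : (∑' n, gfun t b Tt n (4*a+1))
      = 1/4 * (∑' n, gfun t b Tt n (4*a)) + 3/4 * (∑' n, gfun t b Tt n (4*a+2)) := by
    have h := tsum_gfun_rec t b Tt hSU (4*a+1) (by omega) (by omega) (by omega)
    have hm := USaux.P_mod12 (x := 4*a+1) (by omega) (by omega)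
    rw [hm.1, hm.2, (show (4*a+1:ℕ)-1 = 4*a by omega)] at h
    exact h
  have eU6 : (∑' n, gfun t b Tt n (4*a+2))
      = 1/4 * (∑' n, gfun t b Tt n (4*a+1)) + 3/4 * (∑' n, gfun t b Tt n (4*a+3)) := by
    have h := tsum_gfun_rec t b Tt hSU (4*a+2) (by omega) (by omega) (by omega)
    have hm := USaux.P_mod12 (x := 4*a+2) (by omega) (by omega)
    rw [hm.1, hm.2, (show (4*a+2:ℕ)-1 = 4*a+1 by omega)] at h
    exact h
  have eU7 : (∑' n, gfun t b Tt n (4*a+3))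
      = 8/9 * (∑' n, gfun t b Tt n (4*a+2)) + 1/9 * (∑' n, gfun t b Tt n t) := by
    have h := tsum_gfun_rec t b Tt hSU (4*a+3) (by omega) (by omega) (by omega)
    have hm := USaux.P_mod3 (x := 4*a+3) (by omega) (by omega)
    rw [hm.1, hm.2, (show (4*a+3:ℕ)-1 = 4*a+2 by omega), (show (4*a+3:ℕ)+1 = t by omega)] at h
    exact h
  have hU4 : (∑' n, gfun t b Tt n (4*a)) = 9/17 := by linarith
  -- interior recursion equations for V
  have eV1 : (∑' n, gfun t b Tb n (4*a-3))
      = 1/4 * (∑' n, gfun t b Tb n b) + 3/4 * (∑' n, gfun t b Tb n (4*a-2)) := by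
    have h := tsum_gfun_rec t b Tb hSV (4*a-3) (by omega) (by omega) (by omega)
    have hm := USaux.P_mod12 (x := 4*a-3) (by omega) (by omega)
    rw [hm.1, hm.2, (show (4*a-3:ℕ)-1 = b by omega), (show (4*a-3:ℕ)+1 = 4*a-2 by omega)] at h
    exact h
  have eV2 : (∑' n, gfun t b Tb n (4*a-2))
      = 1/4 * (∑' n, gfun t b Tb n (4*a-3)) + 3/4 * (∑' n, gfun t b Tb n (4*a-1)) := by
    have h := tsum_gfun_rec t b Tb hSV (4*a-2) (by omega) (by omega) (by omega)
    have hm := USaux.P_mod12 (x := 4*a-2) (by omega) (by omega)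
    rw [hm.1, hm.2, (show (4*a-2:ℕ)-1 = 4*a-3 by omega), (show (4*a-2:ℕ)+1 = 4*a-1 by omega)] at h
    exact h
  have eV3 : (∑' n, gfun t b Tb n (4*a-1))
      = 8/9 * (∑' n, gfun t b Tb n (4*a-2)) + 1/9 * (∑' n, gfun t b Tb n (4*a)) := by
    have h := tsum_gfun_rec t b Tb hSV (4*a-1) (by omega) (by omega) (by omega)
    have hm := USaux.P_mod3 (x := 4*a-1) (by omega) (by omega)
    rw [hm.1, hm.2, (show (4*a-1:ℕ)-1 = 4*a-2 by omega), (show (4*a-1:ℕ)+1 = 4*a by omega)] at h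
    exact h
  have eV4 : (∑' n, gfun t b Tb n (4*a))
      = 1/2 * (∑' n, gfun t b Tb n (4*a-1)) + 1/2 * (∑' n, gfun t b Tb n (4*a+1)) := by
    have h := tsum_gfun_rec t b Tb hSV (4*a) (by omega) (by omega) (by omega)
    have hm := USaux.P_mod0 (x := 4*a) (by omega) (by omega)
    rw [hm.1, hm.2, (show (4*a:ℕ)-1 = 4*a-1 by omega)] at h
    exact h
  have eV5 : (∑' n, gfun t b Tb n (4*a+1))
      = 1/4 * (∑' n, gfun t b Tb n (4*a)) + 3/4 * (∑' n, gfun t b Tb n (4*a+2)) := by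
    have h := tsum_gfun_rec t b Tb hSV (4*a+1) (by omega) (by omega) (by omega)
    have hm := USaux.P_mod12 (x := 4*a+1) (by omega) (by omega)
    rw [hm.1, hm.2, (show (4*a+1:ℕ)-1 = 4*a by omega)] at h
    exact h
  have eV6 : (∑' n, gfun t b Tb n (4*a+2))
      = 1/4 * (∑' n, gfun t b Tb n (4*a+1)) + 3/4 * (∑' n, gfun t b Tb n (4*a+3)) := by
    have h := tsum_gfun_rec t b Tb hSV (4*a+2) (by omega) (by omega) (by omega)
    have hm := USaux.P_mod12 (x := 4*a+2) (by omega) (by omega)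
    rw [hm.1, hm.2, (show (4*a+2:ℕ)-1 = 4*a+1 by omega)] at h
    exact h
  have eV7 : (∑' n, gfun t b Tb n (4*a+3))
      = 8/9 * (∑' n, gfun t b Tb n (4*a+2)) + 1/9 * (∑' n, gfun t b Tb n t) := by
    have h := tsum_gfun_rec t b Tb hSV (4*a+3) (by omega) (by omega) (by omega)
    have hm := USaux.P_mod3 (x := 4*a+3) (by omega) (by omega)
    rw [hm.1, hm.2, (show (4*a+3:ℕ)-1 = 4*a+2 by omega), (show (4*a+3:ℕ)+1 = t by omega)] at h
    exact h
  have hV4 : (∑' n, gfun t b Tb n (4*a)) = 8/17 := by linarith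
  -- events
  set A : Set Ω := {ω | ∃ n : ℕ, X n ω = 4 * (a + 1) ∧ ∀ m ≤ n, X m ω ≠ 4 * (a - 1)} with hA
  set A' : Set Ω := {ω | ∃ n : ℕ, X n ω = b ∧ ∀ m ≤ n, X m ω ≠ t} with hA'
  -- upper bound for A
  have hAsub : A ⊆ ⋃ n : ℕ, {ω | (∀ m < n, ¬(X m ω = t ∨ X m ω = b)) ∧ Tt (X n ω)} := by
    rintro ω ⟨n, hn, hb⟩
    have hex : ∃ k, X k ω = t := ⟨n, hn⟩
    refine Set.mem_iUnion.2 ⟨Nat.find hex, ⟨fun m hm => ?_, Nat.find_spec hex⟩⟩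
    rintro (h | h)
    · exact Nat.find_min hex hm h
    · exact hb m (le_trans (le_of_lt hm) (Nat.find_min' hex hn)) h
  have hPrA : Pr A ≤ ENNReal.ofReal (9/17) := by
    rw [← hU4, ENNReal.ofReal_tsum_of_nonneg (fun n => gfun_nonneg t b Tt n (4*a)) (hSU (4*a))]
    refine le_trans (measure_mono hAsub) (le_trans (measure_iUnion_le _) ?_)
    exact ENNReal.tsum_le_tsum fun n => cyl_bound Pr a X hX t b Tt n
  have hA'sub : A' ⊆ ⋃ n : ℕ, {ω | (∀ m < n, ¬(X m ω = t ∨ X m ω = b)) ∧ Tb (X n ω)} := by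
    rintro ω ⟨n, hn, hb⟩
    have hex : ∃ k, X k ω = b := ⟨n, hn⟩
    refine Set.mem_iUnion.2 ⟨Nat.find hex, ⟨fun m hm => ?_, Nat.find_spec hex⟩⟩
    rintro (h | h)
    · exact hb m (le_trans (le_of_lt hm) (Nat.find_min' hex hn)) h
    · exact Nat.find_min hex hm h
  have hPrA' : Pr A' ≤ ENNReal.ofReal (8/17) := by
    rw [← hV4, ENNReal.ofReal_tsum_of_nonneg (fun n => gfun_nonneg t b Tb n (4*a)) (hSV (4*a))]
    refine le_trans (measure_mono hA'sub) (le_trans (measure_iUnion_le _) ?_)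
    exact ENNReal.tsum_le_tsum fun n => cyl_bound Pr a X hX t b Tb n
  -- covering
  have hcover : ∀ n : ℕ, (Set.univ : Set Ω)
      ⊆ A ∪ (A' ∪ {ω | (∀ m < n, ¬(X m ω = t ∨ X m ω = b)) ∧ TI (X n ω)}) := by
    intro n ω _
    by_cases hI : ∀ m ≤ n, ¬(X m ω = t ∨ X m ω = b)
    · exact Or.inr (Or.inr ⟨fun m hm => hI m (le_of_lt hm), hI n le_rfl⟩)
    · push_neg at hI
      obtain ⟨m0, hm0, hP⟩ := hI
      have hex : ∃ k, X k ω = t ∨ X k ω = b := ⟨m0, hP⟩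
      rcases Nat.find_spec hex with h | h
      · refine Or.inl ⟨Nat.find hex, h, fun m hm hc => ?_⟩
        rcases lt_or_eq_of_le hm with hlt | heq
        · exact Nat.find_min hex hlt (Or.inr hc)
        · rw [heq] at hc; rw [hc] at h; exact hne h.symm
      · refine Or.inr (Or.inl ⟨Nat.find hex, h, fun m hm hc => ?_⟩)
        rcases lt_or_eq_of_le hm with hlt | heq
        · exact Nat.find_min hex hlt (Or.inl hc)
        · rw [heq] at hc; rw [hc] at h; exact hne h
  -- real-valued bounds
  set r : ℝ := (Pr A).toReal with hr
  have hup : r ≤ 9/17 := by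
    have := ENNReal.toReal_mono ENNReal.ofReal_ne_top hPrA
    rwa [ENNReal.toReal_ofReal (by norm_num)] at this
  have hlow : ∀ n : ℕ, (1:ℝ) ≤ r + 8/17 + gfun t b TI n (4*a) := by
    intro n
    have h1 : (1:ℝ≥0∞) ≤ Pr A + (ENNReal.ofReal (8/17)
        + ENNReal.ofReal (gfun t b TI n (4*a))) := by
      calc (1:ℝ≥0∞) = Pr Set.univ := measure_univ.symm
        _ ≤ Pr (A ∪ (A' ∪ {ω | (∀ m < n, ¬(X m ω = t ∨ X m ω = b)) ∧ TI (X n ω)})) :=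
            measure_mono (hcover n)
        _ ≤ Pr A + Pr (A' ∪ {ω | (∀ m < n, ¬(X m ω = t ∨ X m ω = b)) ∧ TI (X n ω)}) :=
            measure_union_le _ _
        _ ≤ Pr A + (Pr A' + Pr {ω | (∀ m < n, ¬(X m ω = t ∨ X m ω = b)) ∧ TI (X n ω)}) :=
            add_le_add_right (measure_union_le _ _) _
        _ ≤ Pr A + (ENNReal.ofReal (8/17) + ENNReal.ofReal (gfun t b TI n (4*a))) :=
            add_le_add_right (add_le_add hPrA' (cyl_bound Pr a X hX t b TI n)) _
    have hfin : Pr A + (ENNReal.ofReal (8/17) + ENNReal.ofReal (gfun t b TI n (4*a))) ≠ ⊤ :=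
      ENNReal.add_ne_top.2 ⟨measure_ne_top Pr A,
        ENNReal.add_ne_top.2 ⟨ENNReal.ofReal_ne_top, ENNReal.ofReal_ne_top⟩⟩
    have h2 := ENNReal.toReal_mono hfin h1
    rw [ENNReal.toReal_one, ENNReal.toReal_add (measure_ne_top Pr A)
        (ENNReal.add_ne_top.2 ⟨ENNReal.ofReal_ne_top, ENNReal.ofReal_ne_top⟩),
      ENNReal.toReal_add ENNReal.ofReal_ne_top ENNReal.ofReal_ne_top,
      ENNReal.toReal_ofReal (by norm_num : (0:ℝ) ≤ 8/17),
      ENNReal.toReal_ofReal (gfun_nonneg t b TI n (4*a))] at h2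
    linarith
  -- limit of the escape probability
  have hre : (fun n : ℕ => gfun t b TI n (4*a))
      = fun n => 1 - ((∑ m ∈ Finset.range (n+1), gfun t b Tt m (4*a))
        + (∑ m ∈ Finset.range (n+1), gfun t b Tb m (4*a))) := by
    funext n
    have := gfun_total t b hne n (4*a)
    linarith
  have hSt : Tendsto (fun n : ℕ => ∑ m ∈ Finset.range (n+1), gfun t b Tt m (4*a))
      atTop (nhds (9/17)) := by
    have h := (hSU (4*a)).hasSum.tendsto_sum_nat
    rw [hU4] at h
    exact h.comp (tendsto_add_atTop_nat 1)
  have hSb : Tendsto (fun n : ℕ => ∑ m ∈ Finset.range (n+1), gfun t b Tb m (4*a))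
      atTop (nhds (8/17)) := by
    have h := (hSV (4*a)).hasSum.tendsto_sum_nat
    rw [hV4] at h
    exact h.comp (tendsto_add_atTop_nat 1)
  have hlim : Tendsto (fun n : ℕ => gfun t b TI n (4*a)) atTop (nhds 0) := by
    rw [hre]
    have hconst : Tendsto (fun _ : ℕ => (1:ℝ)) atTop (nhds 1) := tendsto_const_nhds
    have h2 := hconst.sub (hSt.add hSb)
    convert h2 using 2
    norm_num
  have hlow' : 9/17 ≤ r := by
    have hev : ∀ n : ℕ, (1:ℝ) - 8/17 - r ≤ gfun t b TI n (4*a) := fun n => by linarith [hlow n]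
    have h := ge_of_tendsto hlim (Filter.Eventually.of_forall hev)
    linarith
  linarith
end

section
/- Let P be the Example 2 Uniform Selection transition matrix on the nonnegative integers, let a ≥ 2 be an integer, and let (X_n) be a Markov chain with transitions P started at 4a. Then the probability that the chain ever reaches the state 3, namely ℙ(∃ n, X_n = 3), is at most (8/9)^{a-1}, which is strictly less than 1. In particular the chain may fail with positive probability to ever reach the mode of the target distribution. -/
open MeasureTheory Classical

/-! ### Auxiliary: the harmonic function -/

noncomputable def usF (x : ℕ) : ℝ :=
  (1/22) * (8/9)^(x/4) *
    (if x % 4 = 0 then 189/8 else if x % 4 = 1 then 45/2 else if x % 4 = 2 then 177/8 else 22)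

lemma usF_nonneg (x : ℕ) : 0 ≤ usF x := by
  unfold usF
  have : (0:ℝ) ≤ (8/9:ℝ)^(x/4) := by positivity
  split_ifs <;> nlinarith

lemma usF_three : usF 3 = 1 := by norm_num [usF]

lemma uniformSelP_ne_zero {x y : ℕ} (h : uniformSelP x y ≠ 0) :
    (x = 0 ∧ y = 1) ∨ (1 ≤ x ∧ (y = x - 1 ∨ y = x + 1)) := by
  unfold uniformSelP at h
  split_ifs at h <;> simp_all <;> omega

lemma usF_val (x k s : ℕ) (h : x = 4*k+s) (hs : s < 4) :
    usF x = (1/22) * (8/9)^k *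
      (if s = 0 then 189/8 else if s = 1 then 45/2 else if s = 2 then 177/8 else 22) := by
  have h1 : x / 4 = k := by omega
  have h2 : x % 4 = s := by omega
  rw [usF, h1, h2]

lemma usF_harmonic {x : ℕ} (hx : 4 ≤ x) :
    uniformSelP x (x-1) * usF (x-1) + uniformSelP x (x+1) * usF (x+1) = usF x := by
  have hs : x % 4 = 0 ∨ x % 4 = 1 ∨ x % 4 = 2 ∨ x % 4 = 3 := by omega
  rcases hs with hs | hs | hs | hs
  · obtain ⟨m, rfl⟩ : ∃ m, x = 4*m+4 := ⟨x/4 - 1, by omega⟩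
    have h0 : (4*m+4) % 4 = 0 := by omega
    have e1 : 4*m+4-1 = 4*m+3 := by omega
    have p1 : uniformSelP (4*m+4) (4*m+4-1) = 1/2 := by simp [uniformSelP, h0]
    have p2 : uniformSelP (4*m+4) (4*m+4+1) = 1/2 := by simp [uniformSelP, h0]
    rw [p1, p2, e1, usF_val (4*m+3) m 3 (by omega) (by omega),
      usF_val (4*m+4+1) (m+1) 1 (by omega) (by omega),
      usF_val (4*m+4) (m+1) 0 (by omega) (by omega), pow_succ]
    norm_num; ring
  · obtain ⟨m, rfl⟩ : ∃ m, x = 4*m+5 := ⟨x/4 - 1, by omega⟩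
    have h0 : (4*m+5) % 4 = 1 := by omega
    have e1 : 4*m+5-1 = 4*m+4 := by omega
    have p1 : uniformSelP (4*m+5) (4*m+5-1) = 1/4 := by simp [uniformSelP, h0]
    have p2 : uniformSelP (4*m+5) (4*m+5+1) = 3/4 := by
      have hne : ¬ (4*m+5+1 = 4*m+5-1) := by omega
      simp [uniformSelP, h0, hne]
    rw [p1, p2, e1, usF_val (4*m+4) (m+1) 0 (by omega) (by omega),
      usF_val (4*m+5+1) (m+1) 2 (by omega) (by omega),
      usF_val (4*m+5) (m+1) 1 (by omega) (by omega)]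
    norm_num; ring
  · obtain ⟨m, rfl⟩ : ∃ m, x = 4*m+6 := ⟨x/4 - 1, by omega⟩
    have h0 : (4*m+6) % 4 = 2 := by omega
    have e1 : 4*m+6-1 = 4*m+5 := by omega
    have p1 : uniformSelP (4*m+6) (4*m+6-1) = 1/4 := by simp [uniformSelP, h0]
    have p2 : uniformSelP (4*m+6) (4*m+6+1) = 3/4 := by
      have hne : ¬ (4*m+6+1 = 4*m+6-1) := by omega
      simp [uniformSelP, h0, hne]
    rw [p1, p2, e1, usF_val (4*m+5) (m+1) 1 (by omega) (by omega),
      usF_val (4*m+6+1) (m+1) 3 (by omega) (by omega),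
      usF_val (4*m+6) (m+1) 2 (by omega) (by omega)]
    norm_num; ring
  · obtain ⟨m, rfl⟩ : ∃ m, x = 4*m+7 := ⟨x/4 - 1, by omega⟩
    have h0 : (4*m+7) % 4 = 3 := by omega
    have e1 : 4*m+7-1 = 4*m+6 := by omega
    have p1 : uniformSelP (4*m+7) (4*m+7-1) = 8/9 := by simp [uniformSelP, h0]
    have p2 : uniformSelP (4*m+7) (4*m+7+1) = 1/9 := by
      have hne : ¬ (4*m+7+1 = 4*m+7-1) := by omega
      simp [uniformSelP, h0, hne]
    rw [p1, p2, e1, usF_val (4*m+6) (m+1) 2 (by omega) (by omega),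
      usF_val (4*m+7+1) (m+2) 0 (by omega) (by omega),
      usF_val (4*m+7) (m+1) 3 (by omega) (by omega), pow_succ (8/9:ℝ) (m+1)]
    norm_num; ring

lemma usF_step {x M : ℕ} (hx : 4 ≤ x) (hM : x + 1 < M) :
    ∑ y ∈ Finset.range M, uniformSelP x y * usF y = usF x := by
  have hsub : ({x-1, x+1} : Finset ℕ) ⊆ Finset.range M := by
    intro y hy
    simp only [Finset.mem_insert, Finset.mem_singleton] at hy
    rcases hy with rfl | rfl <;> simp [Finset.mem_range] <;> omega
  rw [← Finset.sum_subset hsub]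
  · rw [Finset.sum_pair (by omega : x - 1 ≠ x + 1)]
    exact usF_harmonic hx
  · intro y hy hy'
    simp only [Finset.mem_insert, Finset.mem_singleton] at hy'
    push_neg at hy'
    have : uniformSelP x y = 0 := by
      by_contra h
      rcases uniformSelP_ne_zero h with ⟨h0, _⟩ | ⟨_, h1 | h1⟩ <;> omega
    rw [this, zero_mul]

/-! ### Path weights -/

noncomputable def avoidW (a n : ℕ) (t : ℕ → ℕ) : ℝ :=
  (if t 0 = 4*a ∧ ∀ i ≤ n, t i ≠ 3 then 1 else 0) *
    ∏ i ∈ Finset.range n, uniformSelP (t i) (t (i+1))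

noncomputable def hitW (a n : ℕ) (t : ℕ → ℕ) : ℝ :=
  (if t 0 = 4*a ∧ t n = 3 ∧ ∀ i < n, t i ≠ 3 then 1 else 0) *
    ∏ i ∈ Finset.range n, uniformSelP (t i) (t (i+1))

lemma prod_nonneg' (n : ℕ) (t : ℕ → ℕ) :
    0 ≤ ∏ i ∈ Finset.range n, uniformSelP (t i) (t (i+1)) :=
  Finset.prod_nonneg fun i _ => uniformSelP_nonneg _ _

lemma avoidW_nonneg (a n : ℕ) (t : ℕ → ℕ) : 0 ≤ avoidW a n t := by
  unfold avoidW; split_ifs <;> simp [prod_nonneg' n t]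

lemma hitW_nonneg (a n : ℕ) (t : ℕ → ℕ) : 0 ≤ hitW a n t := by
  unfold hitW; split_ifs <;> simp [prod_nonneg' n t]

lemma avoidW_succ (a n : ℕ) (t : ℕ → ℕ) :
    avoidW a (n+1) t
      = avoidW a n t * ((if t (n+1) = 3 then 0 else 1) * uniformSelP (t n) (t (n+1))) := by
  unfold avoidW
  rw [Finset.prod_range_succ]
  by_cases h1 : t 0 = 4*a ∧ ∀ i ≤ n, t i ≠ 3
  · by_cases h2 : t (n+1) = 3
    · have hne : ¬ (t 0 = 4*a ∧ ∀ i ≤ n+1, t i ≠ 3) := by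
        rintro ⟨-, h⟩; exact h (n+1) le_rfl h2
      rw [if_neg hne, if_pos h1, if_pos h2]; ring
    · have hpos : (t 0 = 4*a ∧ ∀ i ≤ n+1, t i ≠ 3) := by
        refine ⟨h1.1, fun i hi => ?_⟩
        rcases Nat.lt_or_ge i (n+1) with h | h
        · exact h1.2 i (by omega)
        · have : i = n+1 := by omega
          subst this; exact h2
      rw [if_pos hpos, if_pos h1, if_neg h2]; ring
  · have hne : ¬ (t 0 = 4*a ∧ ∀ i ≤ n+1, t i ≠ 3) := by
      rintro ⟨h0, h⟩; exact h1 ⟨h0, fun i hi => h i (by omega)⟩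
    rw [if_neg hne, if_neg h1]; ring

lemma hitW_succ (a n : ℕ) (t : ℕ → ℕ) :
    hitW a (n+1) t
      = avoidW a n t * ((if t (n+1) = 3 then 1 else 0) * uniformSelP (t n) (t (n+1))) := by
  unfold hitW avoidW
  rw [Finset.prod_range_succ]
  by_cases h1 : t 0 = 4*a ∧ ∀ i ≤ n, t i ≠ 3
  · by_cases h2 : t (n+1) = 3
    · have hpos : t 0 = 4*a ∧ t (n+1) = 3 ∧ ∀ i < n+1, t i ≠ 3 :=
        ⟨h1.1, h2, fun i hi => h1.2 i (by omega)⟩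
      rw [if_pos hpos, if_pos h1, if_pos h2]; ring
    · have hne : ¬ (t 0 = 4*a ∧ t (n+1) = 3 ∧ ∀ i < n+1, t i ≠ 3) := by
        rintro ⟨-, h, -⟩; exact h2 h
      rw [if_neg hne, if_pos h1, if_neg h2]; ring
  · have hne : ¬ (t 0 = 4*a ∧ t (n+1) = 3 ∧ ∀ i < n+1, t i ≠ 3) := by
      rintro ⟨h0, h3, h⟩; exact h1 ⟨h0, fun i hi => h i (by omega)⟩
    rw [if_neg hne, if_neg h1]; ring

lemma avoidW_bound {a n : ℕ} (ha : 2 ≤ a) {t : ℕ → ℕ} (h : avoidW a n t ≠ 0) :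
    ∀ i ≤ n, 4 ≤ t i ∧ t i ≤ 4*a + i := by
  unfold avoidW at h
  have h1 : t 0 = 4*a ∧ ∀ i ≤ n, t i ≠ 3 := by
    by_contra hc; rw [if_neg hc, zero_mul] at h; exact h rfl
  have h2 : ∀ i ∈ Finset.range n, uniformSelP (t i) (t (i+1)) ≠ 0 := by
    rw [if_pos h1, one_mul] at h
    exact fun i hi => Finset.prod_ne_zero_iff.mp h i hi
  intro i hi
  induction i with
  | zero => constructor <;> omega
  | succ j ihj =>
    have hj := ihj (by omega)
    have hP := h2 j (Finset.mem_range.mpr (by omega))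
    rcases uniformSelP_ne_zero hP with ⟨h0, _⟩ | ⟨_, hy | hy⟩
    · omega
    · have := h1.2 (j+1) hi; omega
    · have := h1.2 (j+1) hi; omega

lemma hitW_bound {a n : ℕ} {t : ℕ → ℕ} (h : hitW a n t ≠ 0) :
    ∀ i ≤ n, t i ≤ 4*a + i := by
  unfold hitW at h
  have h1 : t 0 = 4*a ∧ t n = 3 ∧ ∀ i < n, t i ≠ 3 := by
    by_contra hc; rw [if_neg hc, zero_mul] at h; exact h rfl
  have h2 : ∀ i ∈ Finset.range n, uniformSelP (t i) (t (i+1)) ≠ 0 := by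
    rw [if_pos h1, one_mul] at h
    exact fun i hi => Finset.prod_ne_zero_iff.mp h i hi
  intro i hi
  induction i with
  | zero => omega
  | succ j ihj =>
    have hj := ihj (by omega)
    have hP := h2 j (Finset.mem_range.mpr (by omega))
    rcases uniformSelP_ne_zero hP with ⟨h0, hy⟩ | ⟨_, hy | hy⟩ <;> omega

def extNat {n : ℕ} (t : Fin (n+1) → ℕ) : ℕ → ℕ := fun i => if h : i < n+1 then t ⟨i,h⟩ else 0

lemma avoidW_congr {a n : ℕ} {t t' : ℕ → ℕ} (h : ∀ i ≤ n, t i = t' i) :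
    avoidW a n t = avoidW a n t' := by
  unfold avoidW
  have h1 : (t 0 = 4*a ∧ ∀ i ≤ n, t i ≠ 3) ↔ (t' 0 = 4*a ∧ ∀ i ≤ n, t' i ≠ 3) := by
    constructor <;> rintro ⟨h0, hh⟩
    · exact ⟨by rw [← h 0 (by omega)]; exact h0, fun i hi => by rw [← h i hi]; exact hh i hi⟩
    · exact ⟨by rw [h 0 (by omega)]; exact h0, fun i hi => by rw [h i hi]; exact hh i hi⟩
  rw [if_congr h1 rfl rfl, Finset.prod_congr rfl fun i hi => ?_]
  rw [Finset.mem_range] at hi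
  rw [h i (by omega), h (i+1) (by omega)]

lemma hitW_congr {a n : ℕ} {t t' : ℕ → ℕ} (h : ∀ i ≤ n, t i = t' i) :
    hitW a n t = hitW a n t' := by
  unfold hitW
  have h1 : (t 0 = 4*a ∧ t n = 3 ∧ ∀ i < n, t i ≠ 3)
      ↔ (t' 0 = 4*a ∧ t' n = 3 ∧ ∀ i < n, t' i ≠ 3) := by
    constructor <;> rintro ⟨h0, h3, hh⟩
    · exact ⟨by rw [← h 0 (by omega)]; exact h0, by rw [← h n le_rfl]; exact h3,
        fun i hi => by rw [← h i (by omega)]; exact hh i hi⟩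
    · exact ⟨by rw [h 0 (by omega)]; exact h0, by rw [h n le_rfl]; exact h3,
        fun i hi => by rw [h i (by omega)]; exact hh i hi⟩
  rw [if_congr h1 rfl rfl, Finset.prod_congr rfl fun i hi => ?_]
  rw [Finset.mem_range] at hi
  rw [h i (by omega), h (i+1) (by omega)]

/-! ### Finite path sums -/

noncomputable def Ssum (a M n : ℕ) : ℝ :=
  ∑ v : Fin (n+1) → Fin M, avoidW a n (extNat fun i => (v i : ℕ))
    * usF (extNat (fun i => (v i : ℕ)) n)

noncomputable def Hsum (a M n : ℕ) : ℝ :=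
  ∑ v : Fin (n+1) → Fin M, hitW a n (extNat fun i => (v i : ℕ))

lemma extNat_snoc_le {n M : ℕ} (u : Fin (n+1) → Fin M) (y : Fin M) {i : ℕ} (hi : i ≤ n) :
    extNat (fun j => ((Fin.snoc u y : Fin (n+2) → Fin M) j : ℕ)) i
      = extNat (fun j => (u j : ℕ)) i := by
  have h1 : i < n+2 := by omega
  have h2 : i < n+1 := by omega
  simp only [extNat, dif_pos h1, dif_pos h2]
  have he : (⟨i, h1⟩ : Fin (n+2)) = Fin.castSucc ⟨i, h2⟩ := rfl
  rw [he, Fin.snoc_castSucc]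

lemma extNat_snoc_last {n M : ℕ} (u : Fin (n+1) → Fin M) (y : Fin M) :
    extNat (fun j => ((Fin.snoc u y : Fin (n+2) → Fin M) j : ℕ)) (n+1) = (y : ℕ) := by
  have h1 : n+1 < n+2 := by omega
  simp only [extNat, dif_pos h1]
  have he : (⟨n+1, h1⟩ : Fin (n+2)) = Fin.last (n+1) := rfl
  rw [he, Fin.snoc_last]

lemma step_lemma {a M n : ℕ} (ha : 2 ≤ a) (hM : 4*a + n + 2 ≤ M) :
    Ssum a M (n+1) + Hsum a M (n+1) = Ssum a M n := by
  rw [Ssum, Hsum, ← Finset.sum_add_distrib]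
  rw [← Equiv.sum_comp (Fin.snocEquiv (fun _ => Fin M))
    (fun v : Fin (n+2) → Fin M => avoidW a (n+1) (extNat fun i => (v i : ℕ))
      * usF (extNat (fun i => (v i : ℕ)) (n+1)) + hitW a (n+1) (extNat fun i => (v i : ℕ)))]
  rw [Fintype.sum_prod_type, Finset.sum_comm]
  rw [Ssum]
  refine Finset.sum_congr rfl fun u _ => ?_
  set U : ℕ → ℕ := extNat (fun i => (u i : ℕ)) with hU
  have key : ∀ y : Fin M,
      avoidW a (n+1) (extNat fun i => ((Fin.snocEquiv (fun _ => Fin M) (y, u)) i : ℕ))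
        * usF (extNat (fun i => ((Fin.snocEquiv (fun _ => Fin M) (y, u)) i : ℕ)) (n+1))
        + hitW a (n+1) (extNat fun i => ((Fin.snocEquiv (fun _ => Fin M) (y, u)) i : ℕ))
      = avoidW a n U * (uniformSelP (U n) (y : ℕ) * usF (y : ℕ)) := by
    intro y
    have hsnoc : (Fin.snocEquiv (fun _ => Fin M) (y, u)) = Fin.snoc u y := rfl
    rw [hsnoc]
    set T : ℕ → ℕ := extNat (fun j => ((Fin.snoc u y : Fin (n+2) → Fin M) j : ℕ)) with hT
    have hTU : ∀ i ≤ n, T i = U i := fun i hi => extNat_snoc_le u y hi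
    have hTl : T (n+1) = (y : ℕ) := extNat_snoc_last u y
    rw [avoidW_succ, hitW_succ, hTl, avoidW_congr hTU, hTU n le_rfl]
    by_cases h3 : (y : ℕ) = 3
    · rw [if_pos h3, if_pos h3, h3, usF_three]; ring
    · rw [if_neg h3, if_neg h3]; ring
  rw [Finset.sum_congr rfl fun y _ => key y, ← Finset.mul_sum]
  have hsum : ∑ y : Fin M, uniformSelP (U n) (y : ℕ) * usF (y : ℕ)
      = ∑ y ∈ Finset.range M, uniformSelP (U n) y * usF y :=
    Fin.sum_univ_eq_sum_range (fun y => uniformSelP (U n) y * usF y) M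
  by_cases hz : avoidW a n U = 0
  · rw [hz]; ring
  · have hb := avoidW_bound ha hz n le_rfl
    rw [hsum, usF_step hb.1 (by omega)]

lemma Ssum_zero {a M : ℕ} (ha : 2 ≤ a) (hM : 4*a < M) : Ssum a M 0 = usF (4*a) := by
  rw [Ssum]
  rw [← Equiv.sum_comp (Equiv.funUnique (Fin 1) (Fin M)).symm
    (fun v : Fin 1 → Fin M => avoidW a 0 (extNat fun i => (v i : ℕ))
      * usF (extNat (fun i => (v i : ℕ)) 0))]
  have key : ∀ y : Fin M,
      avoidW a 0 (extNat fun i : Fin 1 => (((Equiv.funUnique (Fin 1) (Fin M)).symm y) i : ℕ))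
        * usF (extNat (fun i : Fin 1 => (((Equiv.funUnique (Fin 1) (Fin M)).symm y) i : ℕ)) 0)
      = (if (y : ℕ) = 4*a ∧ (y : ℕ) ≠ 3 then 1 else 0) * usF (y : ℕ) := by
    intro y
    have he : ∀ i : ℕ, extNat (fun i : Fin 1 =>
        (((Equiv.funUnique (Fin 1) (Fin M)).symm y) i : ℕ)) i = if i < 1 then (y:ℕ) else 0 := by
      intro i
      by_cases hi : i < 1
      · simp [extNat, dif_pos hi, hi, Equiv.funUnique]
      · simp [extNat, dif_neg hi, hi]
    have h0 := he 0
    rw [if_pos (by omega)] at h0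
    rw [avoidW]
    simp only [Finset.range_zero, Finset.prod_empty, mul_one]
    have hiff : ((extNat fun i : Fin 1 => (((Equiv.funUnique (Fin 1) (Fin M)).symm y) i : ℕ)) 0
        = 4*a ∧ ∀ i ≤ 0, (extNat fun i : Fin 1 =>
          (((Equiv.funUnique (Fin 1) (Fin M)).symm y) i : ℕ)) i ≠ 3)
        ↔ ((y : ℕ) = 4*a ∧ (y : ℕ) ≠ 3) := by
      constructor
      · rintro ⟨hh0, hh1⟩
        rw [h0] at hh0
        exact ⟨hh0, by have := hh1 0 le_rfl; rwa [h0] at this⟩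
      · rintro ⟨hh0, hh1⟩
        refine ⟨by rwa [h0], fun i hi => ?_⟩
        have : i = 0 := by omega
        subst this; rwa [h0]
    rw [if_congr hiff rfl rfl, h0]
  rw [Finset.sum_congr rfl fun y _ => key y]
  rw [Fin.sum_univ_eq_sum_range
    (fun y => (if y = 4*a ∧ y ≠ 3 then (1:ℝ) else 0) * usF y) M]
  rw [Finset.sum_eq_single (4*a)]
  · rw [if_pos ⟨rfl, by omega⟩, one_mul]
  · intro y _ hy
    rw [if_neg (by tauto), zero_mul]
  · intro hmem
    exact absurd (Finset.mem_range.mpr hM) hmem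

lemma Hsum_zero {a M : ℕ} (ha : 2 ≤ a) : Hsum a M 0 = 0 := by
  rw [Hsum]
  refine Finset.sum_eq_zero fun v _ => ?_
  rw [hitW]
  have : ¬ ((extNat fun i => ((v i : ℕ))) 0 = 4*a ∧ (extNat fun i => ((v i : ℕ))) 0 = 3
      ∧ ∀ i < 0, (extNat fun i => ((v i : ℕ))) i ≠ 3) := by
    rintro ⟨hh0, hh1, -⟩; omega
  rw [if_neg this, zero_mul]

lemma Ssum_nonneg (a M n : ℕ) : 0 ≤ Ssum a M n :=
  Finset.sum_nonneg fun v _ => mul_nonneg (avoidW_nonneg _ _ _) (usF_nonneg _)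

lemma telescope {a M n : ℕ} (ha : 2 ≤ a) (hM : 4*a + n + 2 ≤ M) :
    Ssum a M n + ∑ k ∈ Finset.range (n+1), Hsum a M k = usF (4*a) := by
  induction n with
  | zero => rw [Finset.sum_range_one, Hsum_zero ha, Ssum_zero ha (by omega), add_zero]
  | succ m ih =>
    have ih' := ih (by omega)
    have hstep := step_lemma ha (show 4*a + m + 2 ≤ M by omega)
    rw [Finset.sum_range_succ]
    linarith

lemma Hsum_sum_le {a M n : ℕ} (ha : 2 ≤ a) (hM : 4*a + n + 2 ≤ M) :
    ∑ k ∈ Finset.range (n+1), Hsum a M k ≤ usF (4*a) := by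
  have := telescope ha hM
  have h0 := Ssum_nonneg a M n
  linarith

/-! ### The finite-sum bound over arbitrary finite sets of hitting paths -/

lemma fiber_bound {a n M : ℕ} (hM0 : 0 < M)
    (s₂ : Finset (Fin (n+1) → ℕ)) (hbd : ∀ t ∈ s₂, ∀ j : ℕ, extNat t j < M) :
    ∑ t ∈ s₂, hitW a n (extNat t) ≤ Hsum a M n := by
  classical
  set e : (Fin (n+1) → ℕ) → (Fin (n+1) → Fin M) :=
    fun t i => ⟨extNat t (i : ℕ) % M, Nat.mod_lt _ hM0⟩ with he
  have hval : ∀ t ∈ s₂, ∀ i : Fin (n+1), ((e t i : ℕ)) = extNat t (i : ℕ) := by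
    intro t ht i
    simp only [he]
    exact Nat.mod_eq_of_lt (hbd t ht (i : ℕ))
  have hinj : ∀ t ∈ s₂, ∀ t' ∈ s₂, e t = e t' → t = t' := by
    intro t ht t' ht' heq
    funext i
    have h3 := congrArg Fin.val (congrFun heq i)
    rw [hval t ht i, hval t' ht' i] at h3
    have hi : (i : ℕ) < n + 1 := i.isLt
    simpa [extNat, dif_pos hi, Fin.is_le i] using h3
  have hsum_eq : ∑ t ∈ s₂, hitW a n (extNat t)
      = ∑ v ∈ s₂.image e, hitW a n (extNat fun i => ((v i : ℕ))) := by
    rw [Finset.sum_image hinj]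
    refine Finset.sum_congr rfl fun t ht => ?_
    refine hitW_congr fun j hj => ?_
    have hj' : j < n + 1 := by omega
    have h4 : extNat (fun i => ((e t i : ℕ))) j = ((e t ⟨j, hj'⟩ : ℕ)) := by
      simp only [extNat, dif_pos hj']
    rw [h4, hval t ht ⟨j, hj'⟩]
  rw [hsum_eq, Hsum]
  exact Finset.sum_le_sum_of_subset_of_nonneg (Finset.subset_univ _)
    (fun v _ _ => hitW_nonneg _ _ _)

lemma main_finset_bound {a : ℕ} (ha : 2 ≤ a)
    (s : Finset ((n : ℕ) × (Fin (n+1) → ℕ))) :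
    ∑ σ ∈ s, hitW a σ.1 (extNat σ.2) ≤ usF (4*a) := by
  classical
  set N := s.sup (fun σ => σ.1) with hN
  set M := 4*a + N + 2 with hMdef
  have hM0 : 0 < M := by omega
  have hmaps : ∀ σ ∈ s, σ.1 ∈ Finset.range (N+1) := by
    intro σ hσ
    have h := Finset.le_sup (f := fun σ : (n : ℕ) × (Fin (n+1) → ℕ) => σ.1) hσ
    exact Finset.mem_range.mpr (Nat.lt_succ_of_le h)
  rw [← Finset.sum_fiberwise_of_maps_to hmaps (fun σ => hitW a σ.1 (extNat σ.2))]
  have fiber_le : ∀ n ∈ Finset.range (N+1),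
      ∑ σ ∈ s.filter (fun σ => σ.1 = n), hitW a σ.1 (extNat σ.2) ≤ Hsum a M n := by
    intro n hn
    rw [Finset.mem_range] at hn
    rw [← Finset.sum_filter_ne_zero]
    set s₁ := (s.filter (fun σ => σ.1 = n)).filter
      (fun σ => hitW a σ.1 (extNat σ.2) ≠ 0) with hs₁
    have hs₁mem : ∀ σ ∈ s₁, σ.1 = n ∧ hitW a σ.1 (extNat σ.2) ≠ 0 := by
      intro σ hσ
      simp only [hs₁, Finset.mem_filter] at hσ
      exact ⟨hσ.1.2, hσ.2⟩
    set proj : ((m : ℕ) × (Fin (m+1) → ℕ)) → (Fin (n+1) → ℕ) :=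
      fun σ i => extNat σ.2 (i : ℕ) with hproj
    have hprojval : ∀ σ ∈ s₁, ∀ j ≤ n, extNat (proj σ) j = extNat σ.2 j := by
      intro σ hσ j hj
      have hj' : j < n + 1 := by omega
      simp only [extNat, dif_pos hj', hproj]
    have hinj : ∀ σ ∈ s₁, ∀ τ ∈ s₁, proj σ = proj τ → σ = τ := by
      intro σ hσ τ hτ heq
      have h1 := (hs₁mem σ hσ).1
      have h2 := (hs₁mem τ hτ).1
      obtain ⟨m1, t1⟩ := σ
      obtain ⟨m2, t2⟩ := τ
      simp only at h1 h2
      subst h1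
      subst h2
      have ht12 : t1 = t2 := by
        funext i
        have h3 := congrFun heq i
        simp only [hproj] at h3
        simpa [extNat, dif_pos i.isLt, Fin.is_le i] using h3
      rw [ht12]
    have hsum2 : ∑ σ ∈ s₁, hitW a σ.1 (extNat σ.2)
        = ∑ t ∈ s₁.image proj, hitW a n (extNat t) := by
      rw [Finset.sum_image hinj]
      refine Finset.sum_congr rfl fun σ hσ => ?_
      have h1 := (hs₁mem σ hσ).1
      obtain ⟨m1, t1⟩ := σ
      simp only at h1
      subst h1
      exact hitW_congr fun j hj => (hprojval ⟨m1, t1⟩ hσ j hj).symm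
    rw [hsum2]
    refine fiber_bound hM0 _ ?_
    intro t ht j
    rw [Finset.mem_image] at ht
    obtain ⟨σ, hσ, rfl⟩ := ht
    have h1 := (hs₁mem σ hσ).1
    have h2 := (hs₁mem σ hσ).2
    by_cases hj : j ≤ n
    · rw [hprojval σ hσ j hj]
      have hb := hitW_bound h2 j (by omega)
      omega
    · have : ¬ (j < n + 1) := by omega
      simp only [extNat, dif_neg this]
      omega
  calc ∑ n ∈ Finset.range (N+1), ∑ σ ∈ s.filter (fun σ => σ.1 = n), hitW a σ.1 (extNat σ.2)
      ≤ ∑ n ∈ Finset.range (N+1), Hsum a M n := Finset.sum_le_sum fiber_le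
    _ ≤ usF (4*a) := Hsum_sum_le ha (by omega)

lemma usF_4a {a : ℕ} (ha : 2 ≤ a) : usF (4*a) = 21/22 * (8/9)^(a-1) := by
  rw [usF_val (4*a) a 0 (by omega) (by omega)]
  obtain ⟨b, rfl⟩ : ∃ b, a = b + 1 := ⟨a - 1, by omega⟩
  rw [pow_succ]
  norm_num
  ring

/-! ### Main theorem -/

/-- Proposition appendixprop: for the Example 2 Uniform Selection
chain started at `4a` with `a ≥ 2`, the probability of ever reaching state 3
(the mode of the target distribution) is at most `(8/9)^(a-1) < 1`. -/
theorem uniformSel_reach_three_probability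
    {Ω : Type*} [MeasurableSpace Ω]
    (Pr : Measure Ω) [IsProbabilityMeasure Pr]
    (a : ℕ) (ha : 2 ≤ a)
    (X : ℕ → Ω → ℕ)
    (hX : IsMarkovChainFrom Pr uniformSelP (4 * a) X) :
    (Pr {ω | ∃ n : ℕ, X n ω = 3}).toReal ≤ (8 / 9 : ℝ) ^ (a - 1) ∧
      ((8 / 9 : ℝ) ^ (a - 1) < 1) := by
  constructor
  · -- main bound
    set D : ((n : ℕ) × (Fin (n+1) → ℕ)) → Set Ω := fun σ =>
      {ω | ∀ i ≤ σ.1, X i ω = extNat σ.2 i} ∩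
        {ω | extNat σ.2 σ.1 = 3 ∧ ∀ i < σ.1, extNat σ.2 i ≠ 3} with hD
    have hcover : {ω | ∃ n : ℕ, X n ω = 3} ⊆ ⋃ σ, D σ := by
      intro ω hω
      have hex : ∃ n, X n ω = 3 := hω
      set m := Nat.find hex with hm
      have hextX : ∀ i ≤ m, extNat (fun i : Fin (m+1) => X (i : ℕ) ω) i = X i ω := by
        intro i hi
        have hi' : i < m + 1 := by omega
        simp [extNat, dif_pos hi']
        intro h; omega
      refine Set.mem_iUnion.mpr ⟨⟨m, fun i : Fin (m+1) => X (i : ℕ) ω⟩, ?_, ?_, ?_⟩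
      · intro i hi
        have hi' : i ≤ m := hi
        exact (hextX i hi').symm
      · show extNat (fun i : Fin (m+1) => X (i : ℕ) ω) m = 3
        rw [hextX m le_rfl]
        exact Nat.find_spec hex
      · intro i hi
        have hi' : i < m := hi
        show extNat (fun i : Fin (m+1) => X (i : ℕ) ω) i ≠ 3
        rw [hextX i (by omega)]
        exact Nat.find_min hex hi'
    have hDle : ∀ σ : ((n : ℕ) × (Fin (n+1) → ℕ)),
        Pr (D σ) ≤ ENNReal.ofReal (hitW a σ.1 (extNat σ.2)) := by
      intro σ
      obtain ⟨n, t⟩ := σ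
      by_cases hc : extNat t n = 3 ∧ ∀ i < n, extNat t i ≠ 3
      · have hDeq : D ⟨n, t⟩ = {ω | ∀ i ≤ n, X i ω = extNat t i} := by
          rw [hD]
          simp only
          rw [Set.inter_eq_self_of_subset_left]
          intro ω _
          exact hc
        rw [hDeq]
        have h1 : (Pr {ω | ∀ i ≤ n, X i ω = extNat t i}).toReal = (if extNat t 0 = 4 * a then (1 : ℝ) else 0) * ∏ i ∈ Finset.range n, uniformSelP (extNat t i) (extNat t (i + 1)) := by
          unfold IsMarkovChainFrom at hX; exact hX n (extNat t)
        rw [← ENNReal.ofReal_toReal (measure_ne_top Pr {ω | ∀ i ≤ n, X i ω = extNat t i}), h1]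
        apply ENNReal.ofReal_le_ofReal
        rw [hitW]
        by_cases h0 : extNat t 0 = 4*a
        · rw [if_pos h0, if_pos (show extNat t 0 = 4*a ∧ extNat t n = 3
            ∧ ∀ i < n, extNat t i ≠ 3 from ⟨h0, hc.1, hc.2⟩)]
        · rw [if_neg h0, if_neg (show ¬ (extNat t 0 = 4*a ∧ extNat t n = 3
            ∧ ∀ i < n, extNat t i ≠ 3) by tauto)]
      · have hDeq : D ⟨n, t⟩ = ∅ := by
          rw [hD]
          simp only
          rw [Set.eq_empty_iff_forall_notMem]
          rintro ω ⟨-, hω2⟩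
          exact hc hω2
        rw [hDeq, measure_empty]
        exact zero_le
    have hEN : Pr {ω | ∃ n : ℕ, X n ω = 3} ≤ ENNReal.ofReal ((8/9 : ℝ)^(a-1)) := by
      calc Pr {ω | ∃ n : ℕ, X n ω = 3} ≤ Pr (⋃ σ, D σ) := measure_mono hcover
        _ ≤ ∑' σ, Pr (D σ) := measure_iUnion_le _
        _ ≤ ∑' σ : ((n : ℕ) × (Fin (n+1) → ℕ)),
            ENNReal.ofReal (hitW a σ.1 (extNat σ.2)) := ENNReal.tsum_le_tsum hDle
        _ ≤ ENNReal.ofReal ((8/9 : ℝ)^(a-1)) := by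
            rw [ENNReal.tsum_eq_iSup_sum]
            refine iSup_le fun s => ?_
            rw [← ENNReal.ofReal_sum_of_nonneg (fun σ _ => hitW_nonneg _ _ _)]
            apply ENNReal.ofReal_le_ofReal
            calc ∑ σ ∈ s, hitW a σ.1 (extNat σ.2) ≤ usF (4*a) := main_finset_bound ha s
              _ = 21/22 * (8/9 : ℝ)^(a-1) := usF_4a ha
              _ ≤ (8/9 : ℝ)^(a-1) := by
                  have : (0:ℝ) ≤ (8/9 : ℝ)^(a-1) := by positivity
                  linarith
    have := ENNReal.toReal_mono (ENNReal.ofReal_ne_top) hEN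
    rwa [ENNReal.toReal_ofReal (by positivity)] at this
  · exact pow_lt_one₀ (by norm_num) (by norm_num) (by omega)
end

section
/- Let N ≥ 1 and let A_1, …, A_N be strictly positive real numbers. Let R_1, …, R_N be independent random variables, each uniformly distributed on (0,1), and set d_j = -log(R_j)/A_j for each j. Then for each i ∈ {1, …, N}, the probability that d_i is the strict minimum, ℙ(d_i < d_j for all j ≠ i), equals A_i / ∑_{j=1}^N A_j. In other words, the argmin of the d_j selects index i with probability proportional to A_i. -/
open MeasureTheory

/-- Proposition kineticprop: if `R₁, …, R_N` are i.i.d.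
Uniform(0,1) and `d_j = -log(R_j)/A_j` for positive reals `A_j`, then
`ℙ(d_i < d_j for all j ≠ i) = A_i / ∑_j A_j`; that is, the argmin of the `d_j`
selects index `i` with probability proportional to `A_i`. -/
theorem argmin_exponential_selects_proportionally
    (N : ℕ) (hN : 1 ≤ N)
    (A : Fin N → ℝ) (hA : ∀ j, 0 < A j) (i : Fin N) :
    ((Measure.pi fun _ : Fin N => volume.restrict (Set.Ioo (0 : ℝ) 1))
        {r : Fin N → ℝ | ∀ j, j ≠ i →
          -Real.log (r i) / A i < -Real.log (r j) / A j}).toReal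
      = A i / ∑ j, A j := by
  classical
  haveI : Unique {j : Fin N // j = i} := ⟨⟨⟨i, rfl⟩⟩, fun j => Subtype.ext j.2⟩
  set μ0 : Measure ℝ := volume.restrict (Set.Ioo (0:ℝ) 1) with hμ0
  have h1 := measurePreserving_piEquivPiSubtypeProd
    (fun _ : Fin N => μ0) (fun j => j = i)
  have h2 := (@measurePreserving_piUnique _ (Subtype.fintype _) (fun _ : {j : Fin N // j = i} => ℝ)
      _ _ (fun _ => μ0)).prod
      (MeasurePreserving.id (Measure.pi fun _ : {j : Fin N // ¬ j = i} => μ0))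
  have hmp := h2.comp h1
  have hfc : (fun r : Fin N → ℝ => (r i, fun j : {j : Fin N // ¬ j = i} => r j.1))
      = (Prod.map (MeasurableEquiv.piUnique (fun _ : {j : Fin N // j = i} => ℝ)) id) ∘
      (MeasurableEquiv.piEquivPiSubtypeProd (fun _ : Fin N => ℝ) (fun j => j = i)) := by
    funext r
    simp [MeasurableEquiv.piUnique, MeasurableEquiv.piEquivPiSubtypeProd,
      Equiv.piEquivPiSubtypeProd, Equiv.piUnique]
    exact congrArg r (default : {j : Fin N // j = i}).2.symm
  rw [← hfc] at hmp
  set f : (Fin N → ℝ) → ℝ × ({j : Fin N // ¬ j = i} → ℝ) :=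
    fun r => (r i, fun j => r j.1) with hf
  set S' : Set (ℝ × ({j : Fin N // ¬ j = i} → ℝ)) :=
    {q | ∀ j : {j : Fin N // ¬ j = i},
      -Real.log q.1 / A i < -Real.log (q.2 j) / A j.1} with hS'def
  have hS'meas : MeasurableSet S' := by
    have : S' = ⋂ j : {j : Fin N // ¬ j = i},
        {q : ℝ × ({j : Fin N // ¬ j = i} → ℝ) |
          -Real.log q.1 / A i < -Real.log (q.2 j) / A j.1} := by
      ext q; simp [hS'def, Set.mem_iInter]
    rw [this]
    refine MeasurableSet.iInter fun j => ?_
    exact measurableSet_lt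
      (((Real.measurable_log.comp measurable_fst).neg).div_const _)
      (((Real.measurable_log.comp ((measurable_pi_apply j).comp measurable_snd)).neg).div_const _)
  have hpre : {r : Fin N → ℝ | ∀ j, j ≠ i →
      -Real.log (r i) / A i < -Real.log (r j) / A j} = f ⁻¹' S' := by
    ext r
    constructor
    · intro h j; exact h j.1 j.2
    · intro h j hj; exact h ⟨j, hj⟩
  rw [hpre, hmp.measure_preimage hS'meas.nullMeasurableSet, Measure.prod_apply hS'meas]
  set T : ℝ := ∑ j, A j with hT
  have hT0 : 0 < T := Finset.sum_pos (fun j _ => hA j) ⟨i, Finset.mem_univ i⟩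
  set p : ℝ := (T - A i) / A i with hp
  have hsum : ∑ j : {j : Fin N // ¬ j = i}, A j.1 = T - A i := by
    have h1 : ∑ j : {j : Fin N // ¬ j = i}, A j.1
        = ∑ j ∈ Finset.univ.erase i, A j :=
      (Finset.sum_subtype _ (fun x => by simp [Finset.mem_erase]) _).symm
    have h2 := Finset.add_sum_erase Finset.univ A (Finset.mem_univ i)
    rw [h1, hT]; linarith
  have hAi : A i ≤ T := Finset.single_le_sum (fun j _ => (hA j).le) (Finset.mem_univ i)
  have hp0 : 0 ≤ p := div_nonneg (by linarith) (hA i).le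
  have hinner : ∀ x ∈ Set.Ioo (0:ℝ) 1,
      (Measure.pi fun _ : {j : Fin N // ¬ j = i} => μ0) (Prod.mk x ⁻¹' S')
        = ENNReal.ofReal (x ^ p) := by
    intro x hx
    obtain ⟨hx0, hx1⟩ := hx
    have hsec : Prod.mk x ⁻¹' S' = Set.pi Set.univ
        (fun j : {j : Fin N // ¬ j = i} =>
          {t : ℝ | -Real.log x / A i < -Real.log t / A j.1}) := by
      ext y; simp [hS'def, Set.mem_pi]
    rw [hsec, Measure.pi_pi]
    have hfac : ∀ j : {j : Fin N // ¬ j = i},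
        μ0 {t : ℝ | -Real.log x / A i < -Real.log t / A j.1}
          = ENNReal.ofReal (x ^ (A j.1 / A i)) := by
      intro j
      have hBmeas : MeasurableSet {t : ℝ | -Real.log x / A i < -Real.log t / A j.1} :=
        measurableSet_lt measurable_const (Real.measurable_log.neg.div_const _)
      rw [hμ0, Measure.restrict_apply hBmeas]
      have hb1 : x ^ (A j.1 / A i) < 1 :=
        Real.rpow_lt_one hx0.le hx1 (div_pos (hA j.1) (hA i))
      have hbexp : x ^ (A j.1 / A i) = Real.exp (-(-Real.log x / A i * A j.1)) := by
        rw [Real.rpow_def_of_pos hx0]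
        congr 1
        field_simp
      have hsetsEq : {t : ℝ | -Real.log x / A i < -Real.log t / A j.1} ∩ Set.Ioo 0 1
          = Set.Ioo 0 (x ^ (A j.1 / A i)) := by
        ext t
        simp only [Set.mem_inter_iff, Set.mem_setOf_eq, Set.mem_Ioo]
        constructor
        · rintro ⟨hlt, ht0, ht1⟩
          refine ⟨ht0, ?_⟩
          rw [hbexp, ← Real.log_lt_iff_lt_exp ht0]
          rw [lt_div_iff₀ (hA j.1)] at hlt
          linarith
        · rintro ⟨ht0, htb⟩
          refine ⟨?_, ht0, lt_trans htb hb1⟩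
          rw [hbexp, ← Real.log_lt_iff_lt_exp ht0] at htb
          rw [lt_div_iff₀ (hA j.1)]
          linarith
      rw [hsetsEq, Real.volume_Ioo, sub_zero]
    simp_rw [hfac]
    rw [← ENNReal.ofReal_prod_of_nonneg
      (fun j _ => (Real.rpow_pos_of_pos hx0 _).le)]
    congr 1
    rw [← Real.rpow_sum_of_pos hx0]
    congr 1
    rw [← Finset.sum_div, hsum, hp]
  have hval : ∫ x in Set.Ioo (0:ℝ) 1, x ^ p = A i / T := by
    rw [← integral_Ioc_eq_integral_Ioo, ← intervalIntegral.integral_of_le zero_le_one,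
      integral_rpow (Or.inl (by linarith : (-1:ℝ) < p)), Real.one_rpow,
      Real.zero_rpow (by positivity : p + 1 ≠ 0), sub_zero]
    have hpe : p + 1 = T / A i := by
      rw [hp]; field_simp [(hA i).ne']; ring
    rw [hpe, one_div_div]
  have hInt : IntegrableOn (fun x : ℝ => x ^ p) (Set.Ioo 0 1) volume :=
    (intervalIntegral.intervalIntegrable_rpow (Or.inl hp0)).1.mono_set Set.Ioo_subset_Ioc_self
  have hnn : 0 ≤ᵐ[volume.restrict (Set.Ioo (0:ℝ) 1)] fun x : ℝ => x ^ p := by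
    filter_upwards [ae_restrict_mem measurableSet_Ioo] with x hx
    exact Real.rpow_nonneg hx.1.le _
  calc
    (∫⁻ x, (Measure.pi fun _ : {j : Fin N // ¬ j = i} => μ0)
        (Prod.mk x ⁻¹' S') ∂μ0).toReal
        = (∫⁻ x in Set.Ioo (0:ℝ) 1, ENNReal.ofReal (x ^ p)).toReal := by
          congr 1
          exact setLIntegral_congr_fun measurableSet_Ioo
            hinner
    _ = A i / T := by
          rw [← ofReal_integral_eq_lintegral_ofReal hInt hnn, hval,
            ENNReal.toReal_ofReal (div_nonneg (hA i).le hT0.le)]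
end
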